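/- arXiv:1706.08623 — 7 statements merged into one kernel-verified Lean document; each statement's English description precedes it below -/
import Mathlib

section
/- The function I(φ, θ) = b² cos²θ − c² sin²φ sin²θ is a first integral of the static elliptic billiard map B_s: for every (φ, θ) in the domain of B_s, if (φ₁, θ₁) = B_s(φ, θ) then I(φ₁, θ₁) = I(φ, θ). (Since I is π-periodic in both φ and θ, the identification modulo π is immaterial here.) -/
/-!
Each angular momentum about a focus is constant along a line, and reversing the direction only
changes the sign of both, so their product `L₋ L₊` is an invariant of unoriented lines. At a point
of the ellipse, with the velocity making the angle `θ` with the tangent, this product is exactly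
`b² cos²θ − c² sin²φ sin²θ` (using `c² = a² − b²`). The chord from `φ` to `φ₁` is parallel to the
tangent at `(φ + φ₁)/2`, which is what the formula for `φ₁` encodes, and the formula for `θ₁`
gives the chord's angle with the tangent at `φ₁` up to sign and multiples of `π`, to which `I` is
insensitive.
-/

/-- The first integral `I(φ, θ) = b² cos²θ − c² sin²φ sin²θ` of the static elliptic
billiard map. -/
noncomputable def ellipticFirstIntegral (b c φ θ : ℝ) : ℝ :=
  b ^ 2 * Real.cos θ ^ 2 - c ^ 2 * Real.sin φ ^ 2 * Real.sin θ ^ 2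

open Real

/-- The product `L₋ L₊` of the angular momenta of the unit velocity `(cos β, sin β)` at `(x, y)`
about the foci `(∓c, 0)`. -/
noncomputable def focalMomentProduct (c x y β : ℝ) : ℝ :=
  ((x - c) * sin β - y * cos β) * ((x + c) * sin β - y * cos β)

theorem focalMomentProduct_add_int_mul_pi (c x y β : ℝ) (k : ℤ) :
    focalMomentProduct c x y (β + k * π) = focalMomentProduct c x y β := by
  have hk : ((-1 : ℝ) ^ k) ^ 2 = 1 := by rw [← sq_abs]; simp
  simp only [focalMomentProduct, sin_add_int_mul_pi, cos_add_int_mul_pi]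
  linear_combination ((x - c) * sin β - y * cos β) * ((x + c) * sin β - y * cos β) * hk

theorem focalMomentProduct_ellipse_add_int_mul_pi (a b c φ β : ℝ) (k : ℤ) :
    focalMomentProduct c (a * cos (φ + k * π)) (b * sin (φ + k * π)) β =
      focalMomentProduct c (a * cos φ) (b * sin φ) β := by
  have hk : ((-1 : ℝ) ^ k) ^ 2 = 1 := by rw [← sq_abs]; simp
  simp only [focalMomentProduct, sin_add_int_mul_pi, cos_add_int_mul_pi]
  linear_combination (a * cos φ * sin β - b * sin φ * cos β) ^ 2 * hk

theorem focalMomentProduct_eq_of_cross_eq_zero {c x y x' y' β : ℝ}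
    (h : (x' - x) * sin β - (y' - y) * cos β = 0) :
    focalMomentProduct c x' y' β = focalMomentProduct c x y β := by
  unfold focalMomentProduct
  linear_combination ((x' - c) * sin β - y' * cos β + (x + c) * sin β - y * cos β) * h

/-- `(cos β, sin β)` is, up to the factor `κ`, the tangent `(-a sin φ, b cos φ)` rotated by `θ`. -/
theorem focalMomentProduct_ellipse_eq_ellipticFirstIntegral {a b c φ θ β κ : ℝ}
    (hc : c ^ 2 = a ^ 2 - b ^ 2) (hκ : κ ≠ 0)
    (hcos : κ * cos β = -a * sin φ * cos θ - b * cos φ * sin θ)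
    (hsin : κ * sin β = b * cos φ * cos θ - a * sin φ * sin θ) :
    focalMomentProduct c (a * cos φ) (b * sin φ) β = ellipticFirstIntegral b c φ θ := by
  have hφ := sin_sq_add_cos_sq φ
  have hθ := sin_sq_add_cos_sq θ
  have hβ := sin_sq_add_cos_sq β
  set Rs := b * cos φ * cos θ - a * sin φ * sin θ
  set Rc := -a * sin φ * cos θ - b * cos φ * sin θ
  have hκ2 : κ ^ 2 = a ^ 2 * sin φ ^ 2 + b ^ 2 * cos φ ^ 2 := by
    linear_combination -κ ^ 2 * hβ + (κ * sin β + Rs) * hsin + (κ * cos β + Rc) * hcos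
      + (a ^ 2 * sin φ ^ 2 + b ^ 2 * cos φ ^ 2) * hθ
  have hmoment :
      a * cos φ * Rs - b * sin φ * Rc = a * b * cos θ - c ^ 2 * sin φ * cos φ * sin θ := by
    linear_combination (a * b * cos θ) * hφ + (sin φ * cos φ * sin θ) * hc
  apply mul_left_cancel₀ (pow_ne_zero 2 hκ)
  calc κ ^ 2 * focalMomentProduct c (a * cos φ) (b * sin φ) β
      = ((a * cos φ - c) * (κ * sin β) - b * sin φ * (κ * cos β))
          * ((a * cos φ + c) * (κ * sin β) - b * sin φ * (κ * cos β)) := by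
        unfold focalMomentProduct; ring
    _ = (a * cos φ * Rs - b * sin φ * Rc) ^ 2 - c ^ 2 * Rs ^ 2 := by rw [hsin, hcos]; ring
    _ = (a * b * cos θ - c ^ 2 * sin φ * cos φ * sin θ) ^ 2 - c ^ 2 * Rs ^ 2 := by rw [hmoment]
    _ = κ ^ 2 * ellipticFirstIntegral b c φ θ := by
        unfold ellipticFirstIntegral
        linear_combination (-a ^ 2 * b ^ 2 * cos θ ^ 2 + a ^ 2 * c ^ 2 * sin φ ^ 2 * sin θ ^ 2) * hφ
          + (-b ^ 2 * cos φ ^ 2 * cos θ ^ 2 + c ^ 2 * sin φ ^ 2 * cos φ ^ 2 * sin θ ^ 2) * hc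
          - (b ^ 2 * cos θ ^ 2 - c ^ 2 * sin φ ^ 2 * sin θ ^ 2) * hκ2

theorem cos_sub_arctan_mul_sqrt (θ r : ℝ) :
    cos (θ - arctan r) * √(1 + r ^ 2) = cos θ + sin θ * r := by
  have : √(1 + r ^ 2) ≠ 0 := by positivity
  rw [cos_sub, cos_arctan, sin_arctan]
  field_simp

theorem sin_sub_arctan_mul_sqrt (θ r : ℝ) :
    sin (θ - arctan r) * √(1 + r ^ 2) = sin θ - cos θ * r := by
  have : √(1 + r ^ 2) ≠ 0 := by positivity
  rw [sin_sub, cos_arctan, sin_arctan]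
  field_simp

theorem div_mul_tan_eq (a b φ : ℝ) : b / (a * tan φ) = b * cos φ / (a * sin φ) := by
  rw [tan_eq_sin_div_cos, mul_div_assoc', div_div_eq_mul_div]

theorem ellipticFirstIntegral_eq_focalMomentProduct {a b c φ : ℝ} (ha : a ≠ 0)
    (hc : c ^ 2 = a ^ 2 - b ^ 2) (hφ : sin φ ≠ 0) (θ : ℝ) :
    ellipticFirstIntegral b c φ θ =
      focalMomentProduct c (a * cos φ) (b * sin φ) (θ - arctan (b / (a * tan φ))) := by
  set r := b / (a * tan φ) with hr
  rw [div_mul_tan_eq] at hr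
  have hρ : 0 < √(1 + r ^ 2) := by positivity
  refine (focalMomentProduct_ellipse_eq_ellipticFirstIntegral hc (κ := -a * sin φ * √(1 + r ^ 2))
    (mul_ne_zero (mul_ne_zero (neg_ne_zero.mpr ha) hφ) hρ.ne') ?_ ?_).symm
  · rw [mul_assoc, mul_comm (√_), cos_sub_arctan_mul_sqrt, hr]
    field_simp
    ring
  · rw [mul_assoc, mul_comm (√_), sin_sub_arctan_mul_sqrt, hr]
    field_simp
    ring

theorem ellipse_chord_cross (a b φ ψ β : ℝ) :
    (a * cos (2 * ψ - φ) - a * cos φ) * sin β - (b * sin (2 * ψ - φ) - b * sin φ) * cos β =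
      -2 * sin (ψ - φ) * (a * sin ψ * sin β + b * cos ψ * cos β) := by
  obtain ⟨δ, rfl⟩ : ∃ δ, φ = ψ - δ := ⟨ψ - φ, by ring⟩
  rw [show 2 * ψ - (ψ - δ) = ψ + δ by ring, show ψ - (ψ - δ) = δ by ring,
    cos_add, sin_add, cos_sub, sin_sub]
  ring

/-- With `t = tan φ`, `hX` is the map's formula for `X = tan ψ`, where `2ψ ≡ φ + φ₁`: the tangent
at `ψ` is parallel to the velocity leaving `(a cos φ, b sin φ)`. -/
theorem chord_direction {a b t θ X : ℝ} (ha : a ≠ 0) (ht : t ≠ 0) (hθ : cos θ ≠ 0)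
    (hX : a * X * (b - a * t * tan θ) = b * (a * t + b * tan θ)) :
    a * sin (arctan X) * sin (θ - arctan (b / (a * t)))
      + b * cos (arctan X) * cos (θ - arctan (b / (a * t))) = 0 := by
  set r := b / (a * t)
  have hρ : 0 < √(1 + r ^ 2) := by positivity
  have hsinθ : sin θ = tan θ * cos θ := by rw [tan_eq_sin_div_cos, div_mul_cancel₀ _ hθ]
  have hslope : a * X * (tan θ - r) + b * (1 + tan θ * r) = 0 := by
    simp only [r]
    field_simp
    linear_combination -hX
  have hcross : a * X * sin (θ - arctan r) + b * cos (θ - arctan r) = 0 := by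
    refine (mul_eq_zero_iff_right hρ.ne').mp ?_
    rw [add_mul, mul_assoc, mul_assoc b, sin_sub_arctan_mul_sqrt, cos_sub_arctan_mul_sqrt, hsinθ]
    linear_combination cos θ * hslope
  rw [sin_arctan, cos_arctan]
  linear_combination hcross / √(1 + X ^ 2)

theorem static_billiard_first_integral_general
    (a b : ℝ) (hb : 0 < b) (hab : b < a)
    (c : ℝ) (hc : c = Real.sqrt (a ^ 2 - b ^ 2))
    (φ θ φ₁ θ₁ : ℝ)
    (hcosφ : Real.cos φ ≠ 0) (hcosθ : Real.cos θ ≠ 0)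
    (hsinφ : Real.sin φ ≠ 0)
    (hden : b - a * Real.tan φ * Real.tan θ ≠ 0)
    (hsinφ₁ : Real.sin φ₁ ≠ 0)
    (hφ₁ : ∃ k : ℤ, φ₁ = -φ + 2 * Real.arctan (b * (a * Real.tan φ + b * Real.tan θ) /
        (a * (b - a * Real.tan φ * Real.tan θ))) + k * Real.pi)
    (hθ₁ : ∃ k : ℤ, θ₁ = -θ + Real.arctan (b / (a * Real.tan φ))
        - Real.arctan (b / (a * Real.tan φ₁)) + k * Real.pi) :
    ellipticFirstIntegral b c φ₁ θ₁ = ellipticFirstIntegral b c φ θ := by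
  obtain ⟨k, hk⟩ := hφ₁
  obtain ⟨m, hm⟩ := hθ₁
  have ha : a ≠ 0 := (hb.trans hab).ne'
  have hc2 : c ^ 2 = a ^ 2 - b ^ 2 := by
    rw [hc, sq_sqrt]
    nlinarith
  set ψ := arctan (b * (a * tan φ + b * tan θ) / (a * (b - a * tan φ * tan θ)))
  set β := θ - arctan (b / (a * tan φ))
  have htan : tan φ ≠ 0 := by rw [tan_eq_sin_div_cos]; exact div_ne_zero hsinφ hcosφ
  have hdir : a * sin ψ * sin β + b * cos ψ * cos β = 0 :=
    chord_direction ha htan hcosθ (by field_simp)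
  have hφ₁ : φ₁ = (2 * ψ - φ) + k * π := by rw [hk]; ring
  have hθ₁ : -θ₁ - arctan (b / (a * tan φ₁)) = β + (-m : ℤ) * π := by rw [hm]; push_cast; ring
  calc ellipticFirstIntegral b c φ₁ θ₁
      = ellipticFirstIntegral b c φ₁ (-θ₁) := by simp [ellipticFirstIntegral]
    _ = focalMomentProduct c (a * cos φ₁) (b * sin φ₁) β := by
        rw [ellipticFirstIntegral_eq_focalMomentProduct ha hc2 hsinφ₁, hθ₁,
          focalMomentProduct_add_int_mul_pi]
    _ = focalMomentProduct c (a * cos (2 * ψ - φ)) (b * sin (2 * ψ - φ)) β := by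
        rw [hφ₁, focalMomentProduct_ellipse_add_int_mul_pi]
    _ = focalMomentProduct c (a * cos φ) (b * sin φ) β :=
        focalMomentProduct_eq_of_cross_eq_zero (by rw [ellipse_chord_cross, hdir, mul_zero])
    _ = ellipticFirstIntegral b c φ θ :=
        (ellipticFirstIntegral_eq_focalMomentProduct ha hc2 hsinφ θ).symm

/-- `I` is a first integral of the static elliptic billiard map `B_s`:
if `(φ₁, θ₁) = B_s(φ, θ)` (the images being given by the defining formulas of `B_s`
modulo `π`), then `I(φ₁, θ₁) = I(φ, θ)`. -/
theorem static_billiard_first_integral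
    (a b : ℝ) (hb : 0 < b) (hab : b < a)
    (c : ℝ) (hc : c = Real.sqrt (a ^ 2 - b ^ 2))
    (φ θ φ₁ θ₁ : ℝ)
    (hθ : θ ∈ Set.Ioo 0 Real.pi)
    (hcosφ : Real.cos φ ≠ 0) (hcosθ : Real.cos θ ≠ 0)
    (hsinφ : Real.sin φ ≠ 0)
    (hden : b - a * Real.tan φ * Real.tan θ ≠ 0)
    (hcosφ₁ : Real.cos φ₁ ≠ 0) (hsinφ₁ : Real.sin φ₁ ≠ 0)
    (hφ₁ : ∃ k : ℤ, φ₁ = -φ + 2 * Real.arctan (b * (a * Real.tan φ + b * Real.tan θ) /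
        (a * (b - a * Real.tan φ * Real.tan θ))) + k * Real.pi)
    (hθ₁ : ∃ k : ℤ, θ₁ = -θ + Real.arctan (b / (a * Real.tan φ))
        - Real.arctan (b / (a * Real.tan φ₁)) + k * Real.pi) :
    ellipticFirstIntegral b c φ₁ θ₁ = ellipticFirstIntegral b c φ θ :=
  static_billiard_first_integral_general a b hb hab c hc φ θ φ₁ θ₁ hcosφ hcosθ hsinφ hden hsinφ₁ hφ₁
    hθ₁
end

section
/- Dynamics on the separatrix branch W₁ (trajectories through the focus (c, 0)): let ξ₀ > 0, let φ₀ = 2 arctan ξ₀ ∈ (0, π), and let θ₀ ∈ (π/2, π) be the unique angle with tan θ₀ = −b(1 + ξ₀²)/(2 c ξ₀). Then for every integer n ≥ 0, the n-th iterate of the static billiard map satisfies B_sⁿ(φ₀, θ₀) = (φ_n, θ_n) (mod π), where φ_n = 2 arctan(λⁿ ξ₀) and θ_n ∈ (π/2, π) is the unique angle with tan θ_n = −b(1 + λ^{2n} ξ₀²)/(2 c λⁿ ξ₀). -/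
/-!
Parametrize `W₁` by `ξ = tan (φ / 2) > 0`; along `W₁` the outgoing angle has
`tan θ = -b (1 + ξ²) / (2 c ξ)`. Working in `(ℝ / πℤ)²`, both defining formulas of `B_s`
reduce to rational identities in `ξ` once `b² = a² - c²` is used: the argument of the
`arctan` in the first one is `tan (arctan ξ + arctan (λ ξ) - π / 2)`, and in the second one
the four arctangents add up to a multiple of `π`. The formulas only apply for `ξ ≠ 1` and
`λ ξ ≠ 1`; at these two parameters the step follows by continuity of `B_s`, since
`(ℝ / πℤ)²` is Hausdorff. Induction on `n` gives the orbit.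
-/

open Real Filter Topology

theorem coe_eq_coe_iff_exists_int_mul_pi {x y : ℝ} :
    (x : AddCircle π) = y ↔ ∃ k : ℤ, x = y + k * π := by
  rw [eq_comm, QuotientAddGroup.eq, AddSubgroup.mem_zmultiples_iff]
  refine exists_congr fun k => ?_
  rw [zsmul_eq_mul]
  constructor <;> intro h <;> linarith

theorem tan_eq_tan_of_coe_eq {x y : ℝ} (h : (x : AddCircle π) = y) : tan x = tan y := by
  obtain ⟨k, rfl⟩ := coe_eq_coe_iff_exists_int_mul_pi.mp h
  exact tan_add_int_mul_pi y k

theorem cos_ne_zero_of_coe_eq {x y : ℝ} (h : (x : AddCircle π) = y) (hy : cos y ≠ 0) :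
    cos x ≠ 0 := by
  obtain ⟨k, rfl⟩ := coe_eq_coe_iff_exists_int_mul_pi.mp h
  rw [cos_add_int_mul_pi]
  exact mul_ne_zero (zpow_ne_zero k (by norm_num)) hy

theorem sin_ne_zero_of_coe_eq {x y : ℝ} (h : (x : AddCircle π) = y) (hy : sin y ≠ 0) :
    sin x ≠ 0 := by
  obtain ⟨k, rfl⟩ := coe_eq_coe_iff_exists_int_mul_pi.mp h
  rw [sin_add_int_mul_pi]
  exact mul_ne_zero (zpow_ne_zero k (by norm_num)) hy

noncomputable def modPi : ℝ × ℝ → AddCircle π × AddCircle π :=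
  Prod.map (↑) (↑)

theorem continuous_modPi : Continuous modPi :=
  (AddCircle.continuous_mk' π).prodMap (AddCircle.continuous_mk' π)

theorem modPi_eq_modPi_iff {p q : ℝ × ℝ} :
    modPi p = modPi q ↔ ∃ k l : ℤ, p = (q.1 + k * π, q.2 + l * π) := by
  simp only [modPi, Prod.map, Prod.ext_iff, coe_eq_coe_iff_exists_int_mul_pi]
  exact ⟨fun ⟨⟨k, hk⟩, ⟨l, hl⟩⟩ => ⟨k, l, hk, hl⟩, fun ⟨k, l, hk, hl⟩ => ⟨⟨k, hk⟩, ⟨l, hl⟩⟩⟩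

theorem tan_two_mul_arctan (x : ℝ) : tan (2 * arctan x) = 2 * x / (1 - x ^ 2) := by
  rw [tan_two_mul, tan_arctan]

theorem cos_two_mul_arctan (x : ℝ) : cos (2 * arctan x) = (1 - x ^ 2) / (1 + x ^ 2) := by
  have : 1 + x ^ 2 ≠ 0 := by positivity
  rw [cos_two_mul, cos_sq_arctan]
  field_simp
  ring

theorem one_sub_sq_ne_zero {x : ℝ} (hx : 0 < x) (hx1 : x ≠ 1) : 1 - x ^ 2 ≠ 0 := by
  rw [sub_ne_zero, ne_comm, Ne, pow_eq_one_iff_of_nonneg hx.le two_ne_zero]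
  exact hx1

theorem cos_two_mul_arctan_ne_zero {x : ℝ} (hx : 0 < x) (hx1 : x ≠ 1) :
    cos (2 * arctan x) ≠ 0 := by
  have := one_sub_sq_ne_zero hx hx1
  rw [cos_two_mul_arctan]
  positivity

theorem sin_two_mul_arctan_pos {x : ℝ} (hx : 0 < x) : 0 < sin (2 * arctan x) := by
  apply sin_pos_of_pos_of_lt_pi
  · have := arctan_pos.mpr hx
    positivity
  · linarith [arctan_lt_pi_div_two x]

theorem arctan_add_arctan_sub_pi_div_two {x y : ℝ} (hx : 0 < x) (hy : 0 < y) :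
    arctan x + arctan y - π / 2 = arctan ((x * y - 1) / (x + y)) := by
  have hxy : x * -y⁻¹ < 1 := by
    have : 0 < x * y⁻¹ := by positivity
    linarith [mul_neg x y⁻¹]
  calc arctan x + arctan y - π / 2 = arctan x + arctan (-y⁻¹) := by
        rw [arctan_neg, arctan_inv_of_pos hy]; ring
    _ = arctan ((x + -y⁻¹) / (1 - x * -y⁻¹)) := arctan_add hxy
    _ = arctan ((x * y - 1) / (x + y)) := by
        have : x + y ≠ 0 := by positivity
        congr 1
        rw [mul_neg, sub_neg_eq_add, ← sub_eq_add_neg]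
        field_simp
        ring

theorem arctan_add_pi_mem_Ioo {t : ℝ} (ht : t < 0) : arctan t + π ∈ Set.Ioo (π / 2) π := by
  have := arctan_lt_zero.mpr ht
  constructor <;> linarith [neg_pi_div_two_lt_arctan t]

theorem sin_arctan_eq_mul_cos_arctan (s : ℝ) : sin (arctan s) = s * cos (arctan s) := by
  rw [← tan_mul_cos (cos_arctan_pos s).ne', tan_arctan]

theorem sin_arctan_add_arctan (s t : ℝ) :
    sin (arctan s + arctan t) = (s + t) * (cos (arctan s) * cos (arctan t)) := by
  rw [sin_add, sin_arctan_eq_mul_cos_arctan, sin_arctan_eq_mul_cos_arctan]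
  ring

theorem cos_arctan_add_arctan (s t : ℝ) :
    cos (arctan s + arctan t) = (1 - s * t) * (cos (arctan s) * cos (arctan t)) := by
  rw [cos_add, sin_arctan_eq_mul_cos_arctan, sin_arctan_eq_mul_cos_arctan]
  ring

/-- The left side of `h` is the imaginary part of `(1 + p i)(1 + q i)(1 + s i)(1 + t i)`. -/
theorem exists_arctan_add_arctan_add_arctan_add_arctan_eq_int_mul_pi {p q s t : ℝ}
    (h : (p + q) * (1 - s * t) + (1 - p * q) * (s + t) = 0) :
    ∃ n : ℤ, arctan p + arctan q + (arctan s + arctan t) = n * π := by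
  have hsin : sin (arctan p + arctan q + (arctan s + arctan t)) = 0 := by
    rw [sin_add, sin_arctan_add_arctan, sin_arctan_add_arctan, cos_arctan_add_arctan,
      cos_arctan_add_arctan]
    linear_combination (cos (arctan p) * cos (arctan q) * (cos (arctan s) * cos (arctan t))) * h
  obtain ⟨n, hn⟩ := sin_eq_zero_iff.mp hsin
  exact ⟨n, hn.symm⟩

structure IsFocalDistance (a b c : ℝ) : Prop where
  pos_b : 0 < b
  pos_c : 0 < c
  lt_a : c < a
  sq_b : b ^ 2 = a ^ 2 - c ^ 2

theorem isFocalDistance_sqrt {a b : ℝ} (hb : 0 < b) (hab : b < a) :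
    IsFocalDistance a b (√(a ^ 2 - b ^ 2)) := by
  have hpos : 0 < a ^ 2 - b ^ 2 := by nlinarith
  have hsq := sq_sqrt hpos.le
  refine ⟨hb, sqrt_pos.mpr hpos, ?_, by linarith⟩
  nlinarith [sqrt_pos.mpr hpos]

/-- `tan θ` for the trajectory of `W₁` leaving the collision point `φ = 2 arctan ξ`. -/
noncomputable def separatrixTan (b c ξ : ℝ) : ℝ :=
  -(b * (1 + ξ ^ 2)) / (2 * c * ξ)

noncomputable def separatrixPoint (b c ξ : ℝ) : ℝ × ℝ :=
  (2 * arctan ξ, arctan (separatrixTan b c ξ))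

theorem separatrixTan_neg {b c ξ : ℝ} (hb : 0 < b) (hc : 0 < c) (hξ : 0 < ξ) :
    separatrixTan b c ξ < 0 :=
  div_neg_of_neg_of_pos (neg_neg_of_pos (by positivity)) (by positivity)

theorem continuousAt_separatrixTan {b c ξ : ℝ} (hc : c ≠ 0) (hξ : ξ ≠ 0) :
    ContinuousAt (separatrixTan b c) ξ :=
  ContinuousAt.div (by fun_prop) (by fun_prop) (by simp [hc, hξ])

namespace IsFocalDistance

variable {a b c lam ξ : ℝ}

theorem pos_a (h : IsFocalDistance a b c) : 0 < a :=
  h.pos_c.trans h.lt_a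

theorem lam_pos (h : IsFocalDistance a b c) (hlam : lam = (a + c) / (a - c)) : 0 < lam :=
  hlam ▸ div_pos (add_pos h.pos_a h.pos_c) (sub_pos.mpr h.lt_a)

theorem add_add_sub_mul_sq_pos (h : IsFocalDistance a b c) (ξ : ℝ) :
    0 < (a + c) + (a - c) * ξ ^ 2 := by
  have := sub_pos.mpr h.lt_a
  have := h.pos_a
  have := h.pos_c
  positivity

theorem mul_separatrixTan (h : IsFocalDistance a b c) (ξ : ℝ) :
    b * separatrixTan b c ξ = -((a ^ 2 - c ^ 2) * (1 + ξ ^ 2)) / (2 * c * ξ) := by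
  rw [separatrixTan, ← h.sq_b]
  ring

theorem separatrixTan_mul (h : IsFocalDistance a b c) (ξ : ℝ) :
    separatrixTan b c ξ * (b * (1 - ξ ^ 2) / (2 * a * ξ)) =
      -((a ^ 2 - c ^ 2) * (1 - ξ ^ 4)) / (4 * a * c * ξ ^ 2) := by
  rw [separatrixTan, ← h.sq_b]
  ring

theorem sub_mul_mul_separatrixTan (h : IsFocalDistance a b c) (hξ : 0 < ξ) (hξ1 : ξ ≠ 1) :
    b - a * (2 * ξ / (1 - ξ ^ 2)) * separatrixTan b c ξ =
      b * ((a + c) + (a - c) * ξ ^ 2) / (c * (1 - ξ ^ 2)) := by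
  have := one_sub_sq_ne_zero hξ hξ1
  have := h.pos_c
  rw [separatrixTan]
  field_simp
  ring

theorem sub_mul_mul_separatrixTan_ne_zero (h : IsFocalDistance a b c) (hξ : 0 < ξ)
    (hξ1 : ξ ≠ 1) : b - a * (2 * ξ / (1 - ξ ^ 2)) * separatrixTan b c ξ ≠ 0 := by
  have := one_sub_sq_ne_zero hξ hξ1
  have := h.pos_b
  have := h.pos_c
  have := h.add_add_sub_mul_sq_pos ξ
  rw [h.sub_mul_mul_separatrixTan hξ hξ1]
  positivity

/-- The right side is `tan (arctan ξ + arctan (λ ξ) - π / 2)`. -/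
theorem fst_formula_arg_eq (h : IsFocalDistance a b c) (hlam : lam = (a + c) / (a - c))
    (hξ : 0 < ξ) (hξ1 : ξ ≠ 1) :
    b * (a * (2 * ξ / (1 - ξ ^ 2)) + b * separatrixTan b c ξ) /
        (a * (b - a * (2 * ξ / (1 - ξ ^ 2)) * separatrixTan b c ξ)) =
      (ξ * (lam * ξ) - 1) / (ξ + lam * ξ) := by
  have := one_sub_sq_ne_zero hξ hξ1
  have := h.pos_b
  have := h.pos_c
  have := h.pos_a
  have : a - c ≠ 0 := (sub_pos.mpr h.lt_a).ne'
  have hnum : a * (2 * ξ / (1 - ξ ^ 2)) + b * separatrixTan b c ξ =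
      ((a + c) * ξ ^ 2 - (a - c)) * ((a + c) + (a - c) * ξ ^ 2) / (2 * c * ξ * (1 - ξ ^ 2)) := by
    rw [h.mul_separatrixTan]
    field_simp
    ring
  have hD := (h.add_add_sub_mul_sq_pos ξ).ne'
  rw [hnum, h.sub_mul_mul_separatrixTan hξ hξ1, hlam]
  generalize (a + c) + (a - c) * ξ ^ 2 = D at hD ⊢
  have : a - c + (a + c) ≠ 0 := by linarith
  field_simp
  ring

/-- `b (1 - ξ²) / (2 a ξ)` is `b / (a tan (2 arctan ξ))`; the four angles are those of the
formula for `θ₁`. -/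
theorem snd_formula_im_eq_zero (h : IsFocalDistance a b c) (hlam : lam = (a + c) / (a - c))
    (hξ : 0 < ξ) :
    (separatrixTan b c (lam * ξ) + b * (1 - (lam * ξ) ^ 2) / (2 * a * (lam * ξ))) *
        (1 - separatrixTan b c ξ * -(b * (1 - ξ ^ 2) / (2 * a * ξ))) +
      (1 - separatrixTan b c (lam * ξ) * (b * (1 - (lam * ξ) ^ 2) / (2 * a * (lam * ξ)))) *
        (separatrixTan b c ξ + -(b * (1 - ξ ^ 2) / (2 * a * ξ))) = 0 := by
  have := h.pos_c
  have := h.pos_a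
  have : a - c ≠ 0 := (sub_pos.mpr h.lt_a).ne'
  rw [mul_neg, sub_neg_eq_add, h.separatrixTan_mul, h.separatrixTan_mul, separatrixTan,
    separatrixTan, hlam]
  field_simp
  ring

end IsFocalDistance

structure IsStaticBilliardMap (a b : ℝ) (Bs : ℝ × ℝ → ℝ × ℝ) : Prop where
  fst : ∀ φ θ : ℝ, cos φ ≠ 0 → cos θ ≠ 0 → b - a * tan φ * tan θ ≠ 0 →
    ∃ k : ℤ, (Bs (φ, θ)).1 = -φ + 2 * arctan (b * (a * tan φ + b * tan θ) /
      (a * (b - a * tan φ * tan θ))) + k * π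
  snd : ∀ φ θ : ℝ, cos φ ≠ 0 → cos θ ≠ 0 → b - a * tan φ * tan θ ≠ 0 → sin φ ≠ 0 →
    cos ((Bs (φ, θ)).1) ≠ 0 → sin ((Bs (φ, θ)).1) ≠ 0 →
    ∃ k : ℤ, (Bs (φ, θ)).2 = -θ + arctan (b / (a * tan φ))
      - arctan (b / (a * tan ((Bs (φ, θ)).1))) + k * π

namespace IsStaticBilliardMap

variable {a b c lam ξ φ θ : ℝ} {Bs : ℝ × ℝ → ℝ × ℝ}

theorem coe_fst_apply (hBs : IsStaticBilliardMap a b Bs) (h : IsFocalDistance a b c)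
    (hlam : lam = (a + c) / (a - c)) (hξ : 0 < ξ) (hξ1 : ξ ≠ 1)
    (hφ : (φ : AddCircle π) = ↑(2 * arctan ξ))
    (hθ : (θ : AddCircle π) = ↑(arctan (separatrixTan b c ξ))) :
    ((Bs (φ, θ)).1 : AddCircle π) = ↑(2 * arctan (lam * ξ)) := by
  have hlξ : 0 < lam * ξ := mul_pos (h.lam_pos hlam) hξ
  have htφ : tan φ = 2 * ξ / (1 - ξ ^ 2) := (tan_eq_tan_of_coe_eq hφ).trans (tan_two_mul_arctan ξ)
  have htθ : tan θ = separatrixTan b c ξ := (tan_eq_tan_of_coe_eq hθ).trans (tan_arctan _)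
  obtain ⟨k, hk⟩ := hBs.fst φ θ (cos_ne_zero_of_coe_eq hφ (cos_two_mul_arctan_ne_zero hξ hξ1))
    (cos_ne_zero_of_coe_eq hθ (cos_arctan_pos _).ne')
    (by rw [htφ, htθ]; exact h.sub_mul_mul_separatrixTan_ne_zero hξ hξ1)
  rw [htφ, htθ, h.fst_formula_arg_eq hlam hξ hξ1, ← arctan_add_arctan_sub_pi_div_two hξ hlξ] at hk
  obtain ⟨m, rfl⟩ := coe_eq_coe_iff_exists_int_mul_pi.mp hφ
  exact coe_eq_coe_iff_exists_int_mul_pi.mpr ⟨k - m - 1, by rw [hk]; push_cast; ring⟩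

theorem coe_snd_apply (hBs : IsStaticBilliardMap a b Bs) (h : IsFocalDistance a b c)
    (hlam : lam = (a + c) / (a - c)) (hξ : 0 < ξ) (hξ1 : ξ ≠ 1) (hlξ1 : lam * ξ ≠ 1)
    (hφ : (φ : AddCircle π) = ↑(2 * arctan ξ))
    (hθ : (θ : AddCircle π) = ↑(arctan (separatrixTan b c ξ))) :
    ((Bs (φ, θ)).2 : AddCircle π) = ↑(arctan (separatrixTan b c (lam * ξ))) := by
  have hlξ : 0 < lam * ξ := mul_pos (h.lam_pos hlam) hξ
  have hφ₁ := hBs.coe_fst_apply h hlam hξ hξ1 hφ hθ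
  have htφ : tan φ = 2 * ξ / (1 - ξ ^ 2) := (tan_eq_tan_of_coe_eq hφ).trans (tan_two_mul_arctan ξ)
  have htφ₁ : tan (Bs (φ, θ)).1 = 2 * (lam * ξ) / (1 - (lam * ξ) ^ 2) :=
    (tan_eq_tan_of_coe_eq hφ₁).trans (tan_two_mul_arctan _)
  have htθ : tan θ = separatrixTan b c ξ := (tan_eq_tan_of_coe_eq hθ).trans (tan_arctan _)
  obtain ⟨k, hk⟩ := hBs.snd φ θ (cos_ne_zero_of_coe_eq hφ (cos_two_mul_arctan_ne_zero hξ hξ1))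
    (cos_ne_zero_of_coe_eq hθ (cos_arctan_pos _).ne')
    (by rw [htφ, htθ]; exact h.sub_mul_mul_separatrixTan_ne_zero hξ hξ1)
    (sin_ne_zero_of_coe_eq hφ (sin_two_mul_arctan_pos hξ).ne')
    (cos_ne_zero_of_coe_eq hφ₁ (cos_two_mul_arctan_ne_zero hlξ hlξ1))
    (sin_ne_zero_of_coe_eq hφ₁ (sin_two_mul_arctan_pos hlξ).ne')
  have hcot (x : ℝ) (hx : 0 < x) (hx1 : x ≠ 1) :
      b / (a * (2 * x / (1 - x ^ 2))) = b * (1 - x ^ 2) / (2 * a * x) := by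
    have := one_sub_sq_ne_zero hx hx1
    field_simp
  rw [htφ, htφ₁, hcot ξ hξ hξ1, hcot _ hlξ hlξ1] at hk
  obtain ⟨n, hn⟩ := exists_arctan_add_arctan_add_arctan_add_arctan_eq_int_mul_pi
    (h.snd_formula_im_eq_zero hlam hξ)
  obtain ⟨m, rfl⟩ := coe_eq_coe_iff_exists_int_mul_pi.mp hθ
  rw [arctan_neg] at hn
  exact coe_eq_coe_iff_exists_int_mul_pi.mpr ⟨k - m - n, by rw [hk]; push_cast; linarith⟩

theorem modPi_apply_of_ne_one (hBs : IsStaticBilliardMap a b Bs) (h : IsFocalDistance a b c)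
    (hlam : lam = (a + c) / (a - c)) (hξ : 0 < ξ) (hξ1 : ξ ≠ 1) (hlξ1 : lam * ξ ≠ 1)
    {p : ℝ × ℝ} (hp : modPi p = modPi (separatrixPoint b c ξ)) :
    modPi (Bs p) = modPi (separatrixPoint b c (lam * ξ)) := by
  obtain ⟨hφ, hθ⟩ := Prod.ext_iff.mp hp
  exact Prod.ext (hBs.coe_fst_apply h hlam hξ hξ1 hφ hθ)
    (hBs.coe_snd_apply h hlam hξ hξ1 hlξ1 hφ hθ)

/-- The exceptional parameters `ξ = 1` and `λ ξ = 1` are reached by continuity of `Bs`. -/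
theorem modPi_apply (hBs : IsStaticBilliardMap a b Bs) (hcont : Continuous Bs)
    (h : IsFocalDistance a b c) (hlam : lam = (a + c) / (a - c)) (hξ : 0 < ξ)
    {p : ℝ × ℝ} (hp : modPi p = modPi (separatrixPoint b c ξ)) :
    modPi (Bs p) = modPi (separatrixPoint b c (lam * ξ)) := by
  obtain ⟨k, l, rfl⟩ := modPi_eq_modPi_iff.mp hp
  set γ : ℝ → ℝ × ℝ := fun y ↦ separatrixPoint b c y + ((k : ℝ) * π, (l : ℝ) * π)
  have hpoint (y : ℝ) (hy : 0 < y) : ContinuousAt (separatrixPoint b c) y :=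
    (continuous_arctan.continuousAt.const_mul 2).prodMk
      (continuous_arctan.continuousAt.comp (continuousAt_separatrixTan h.pos_c.ne' hy.ne'))
  have hlam0 := h.lam_pos hlam
  have hgeneric : ∀ᶠ y in 𝓝[≠] ξ, 0 < y ∧ y ≠ 1 ∧ y ≠ lam⁻¹ :=
    (eventually_nhdsWithin_of_eventually_nhds (eventually_gt_nhds hξ)).and
      (((eventually_cofinite_ne 1).and (eventually_cofinite_ne lam⁻¹)).filter_mono
        (nhdsNE_le_cofinite ξ))
  have hnear : (fun y ↦ modPi (Bs (γ y))) =ᶠ[𝓝[≠] ξ]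
      fun y ↦ modPi (separatrixPoint b c (lam * y)) := by
    filter_upwards [hgeneric] with y ⟨hy, hy1, hly⟩
    refine hBs.modPi_apply_of_ne_one h hlam hy hy1 ?_ (modPi_eq_modPi_iff.mpr ⟨k, l, rfl⟩)
    rwa [Ne, mul_comm, mul_eq_one_iff_eq_inv₀ hlam0.ne']
  refine ((ContinuousAt.eventuallyEq_nhds_iff_eventuallyEq_nhdsNE ?_ ?_).mp hnear).eq_of_nhds
  · exact continuous_modPi.continuousAt.comp
      (hcont.continuousAt.comp ((hpoint ξ hξ).add continuousAt_const))
  · exact continuous_modPi.continuousAt.comp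
      ((hpoint _ (mul_pos hlam0 hξ)).comp (continuousAt_const.mul continuousAt_id))

theorem modPi_iterate_apply (hBs : IsStaticBilliardMap a b Bs) (hcont : Continuous Bs)
    (h : IsFocalDistance a b c) (hlam : lam = (a + c) / (a - c)) (hξ : 0 < ξ)
    {p : ℝ × ℝ} (hp : modPi p = modPi (separatrixPoint b c ξ)) (n : ℕ) :
    modPi (Bs^[n] p) = modPi (separatrixPoint b c (lam ^ n * ξ)) := by
  induction n with
  | zero => simpa using hp
  | succ n ih =>
    rw [Function.iterate_succ_apply', pow_succ', mul_assoc]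
    exact hBs.modPi_apply hcont h hlam (mul_pos (pow_pos (h.lam_pos hlam) n) hξ) ih

end IsStaticBilliardMap

/-- dynamics of the static elliptic billiard map `B_s` on the separatrix
branch `W₁` (trajectories through the focus `(c, 0)`).  `Bs` is any (continuous
extension of the) map given, modulo `π`, by the defining formulas of the static
elliptic billiard map.  Starting from `φ₀ = 2 arctan ξ₀` with `ξ₀ > 0` and
`θ₀ ∈ (π/2, π)` the unique angle with `tan θ₀ = −b(1+ξ₀²)/(2cξ₀)`, the `n`-th iterate
equals, modulo `π`, `(φ_n, θ_n)` with `φ_n = 2 arctan (λⁿ ξ₀)` and `θ_n ∈ (π/2, π)`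
the unique angle with `tan θ_n = −b(1+λ^{2n}ξ₀²)/(2cλⁿξ₀)`. -/
theorem separatrix_W1_dynamics
    (a b : ℝ) (hb : 0 < b) (hab : b < a)
    (c lam : ℝ) (hc : c = Real.sqrt (a ^ 2 - b ^ 2)) (hlam : lam = (a + c) / (a - c))
    (Bs : ℝ × ℝ → ℝ × ℝ) (hcont : Continuous Bs)
    (hBs1 : ∀ φ θ : ℝ, Real.cos φ ≠ 0 → Real.cos θ ≠ 0 →
      b - a * Real.tan φ * Real.tan θ ≠ 0 →
      ∃ k : ℤ, (Bs (φ, θ)).1 = -φ + 2 * Real.arctan (b * (a * Real.tan φ + b * Real.tan θ) /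
        (a * (b - a * Real.tan φ * Real.tan θ))) + k * Real.pi)
    (hBs2 : ∀ φ θ : ℝ, Real.cos φ ≠ 0 → Real.cos θ ≠ 0 →
      b - a * Real.tan φ * Real.tan θ ≠ 0 → Real.sin φ ≠ 0 →
      Real.cos ((Bs (φ, θ)).1) ≠ 0 → Real.sin ((Bs (φ, θ)).1) ≠ 0 →
      ∃ k : ℤ, (Bs (φ, θ)).2 = -θ + Real.arctan (b / (a * Real.tan φ))
        - Real.arctan (b / (a * Real.tan ((Bs (φ, θ)).1))) + k * Real.pi)
    (ξ₀ : ℝ) (hξ₀ : 0 < ξ₀)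
    (φ₀ θ₀ : ℝ) (hφ₀ : φ₀ = 2 * Real.arctan ξ₀)
    (hθ₀mem : θ₀ ∈ Set.Ioo (Real.pi / 2) Real.pi)
    (hθ₀ : Real.tan θ₀ = -(b * (1 + ξ₀ ^ 2)) / (2 * c * ξ₀)) :
    ∀ n : ℕ, ∃ θn ∈ Set.Ioo (Real.pi / 2) Real.pi,
      Real.tan θn = -(b * (1 + (lam ^ n * ξ₀) ^ 2)) / (2 * c * (lam ^ n * ξ₀)) ∧
      ∃ k l : ℤ, Bs^[n] (φ₀, θ₀) =
        (2 * Real.arctan (lam ^ n * ξ₀) + k * Real.pi, θn + l * Real.pi) := by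
  have h : IsFocalDistance a b c := hc ▸ isFocalDistance_sqrt hb hab
  have hBs : IsStaticBilliardMap a b Bs := ⟨hBs1, hBs2⟩
  have hp₀ : modPi (φ₀, θ₀) = modPi (separatrixPoint b c ξ₀) := by
    have hθ₀' : arctan (tan θ₀) = θ₀ - π := by
      rw [← tan_sub_pi]
      exact arctan_tan (by linarith [hθ₀mem.1]) (by linarith [hθ₀mem.2, pi_pos])
    refine modPi_eq_modPi_iff.mpr ⟨0, 1, ?_⟩
    rw [separatrixPoint, separatrixTan, ← hθ₀, hθ₀', hφ₀]
    exact Prod.ext (by simp) (by push_cast; ring)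
  intro n
  have hξn : 0 < lam ^ n * ξ₀ := mul_pos (pow_pos (h.lam_pos hlam) n) hξ₀
  obtain ⟨k, l, hkl⟩ := modPi_eq_modPi_iff.mp (hBs.modPi_iterate_apply hcont h hlam hξ₀ hp₀ n)
  refine ⟨arctan (separatrixTan b c (lam ^ n * ξ₀)) + π,
    arctan_add_pi_mem_Ioo (separatrixTan_neg hb h.pos_c hξn),
    by rw [tan_add_pi, tan_arctan, separatrixTan], k, l - 1, ?_⟩
  rw [hkl, separatrixPoint]
  exact Prod.ext rfl (by push_cast; ring)
end

section
/- The point z = (0, π/2) (corresponding to the period-two billiard motion along the major axis, with φ taken modulo π) is a fixed point of the static elliptic billiard map B_s. Moreover B_s is differentiable at z and the differential DB_s(0, π/2) has eigenvalues λ = (a+c)/(a−c) > 1 and λ^{−1} < 1; in particular z is a hyperbolic saddle fixed point. -/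
/-!
On the dense set where an analytic function `nondegeneracy` is nonzero, the formulas for `B_s`
apply and, after rewriting `2 arctan (N / D)` as `π - 2 arctan (D / N)` and
`arctan (b / (a t))` as `π / 2 - arctan (a t / b)` (both modulo `π`), they agree modulo `π` with
a branch `(nextPhi, nextTheta)` that is smooth near `(0, π / 2)`, where `tan θ` itself blows up.
On a small ball around `(0, π / 2)` the difference between `B_s` and this branch is continuous
with values in `π ℤ`, hence constant, so `B_s` is a translate of the smooth branch there. Its
Jacobian at `(0, π / 2)` is `[[2a²/b² - 1, 2a/b], [2a(a² - b²)/b³, 2a²/b² - 1]]`, which has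
the eigenvectors `(b, ±c)` with eigenvalues `(a ± c) / (a ∓ c)`.
-/

open Real Set Filter Topology AddCommGroup

theorem IsPreconnected.exists_int_forall_eq_add_mul_of_modEq {X : Type*} [TopologicalSpace X]
    {U S : Set X} (hUc : IsPreconnected U) (hU : IsOpen U) (hS : Dense S) {f g : X → ℝ}
    (hf : ContinuousOn f U) (hg : ContinuousOn g U) {p : ℝ}
    (hfg : ∀ x ∈ U ∩ S, g x ≡ f x [PMOD p]) : ∃ k : ℤ, ∀ x ∈ U, f x = g x + k * p := by
  have hmaps : MapsTo (fun x => f x - g x) (U ∩ S) (AddSubgroup.zmultiples p) := fun x hx =>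
    AddSubgroup.mem_zmultiples_iff.mpr (modEq_iff_zsmul.mp (hfg x hx))
  have hmapsU : MapsTo (fun x => f x - g x) U (AddSubgroup.zmultiples p) := fun x hx =>
    AddSubgroup.isClosed_of_discrete.closure_subset <|
      ((hf.sub hg x hx).mono inter_subset_left).mem_closure
        (hS.open_subset_closure_inter hU hx) hmaps
  obtain ⟨y, hy, hconst⟩ := hUc.eqOn_const_of_mapsTo
    (SetLike.isDiscrete_iff_discreteTopology.mpr inferInstance) (hf.sub hg) hmapsU
    ⟨0, zero_mem _⟩
  obtain ⟨k, rfl⟩ := AddSubgroup.mem_zmultiples_iff.mp hy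
  refine ⟨k, fun x hx => ?_⟩
  have h : f x - g x = k • p := hconst hx
  rw [← zsmul_eq_mul, ← h, add_sub_cancel]

theorem AnalyticOnNhd.dense_setOf_ne_zero {𝕜 E F : Type*} [NontriviallyNormedField 𝕜]
    [NormedAddCommGroup E] [NormedSpace 𝕜 E] [PreconnectedSpace E] [NormedAddCommGroup F]
    [NormedSpace 𝕜 F] {f : E → F} (hf : AnalyticOnNhd 𝕜 f univ) {x₀ : E} (hx₀ : f x₀ ≠ 0) :
    Dense {x | f x ≠ 0} := by
  refine dense_iff_inter_open.mpr fun V hV ⟨x, hx⟩ => ?_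
  by_contra hempty
  have hzero : f =ᶠ[𝓝 x] 0 := by
    filter_upwards [hV.mem_nhds hx] with y hy
    by_contra hne
    exact hempty ⟨y, hy, hne⟩
  exact hx₀ (congrFun (hf.eq_of_eventuallyEq (fun _ _ => analyticAt_const) hzero) x₀)

theorem HasFDerivAt.div_of_eq_zero {E : Type*} [NormedAddCommGroup E] [NormedSpace ℝ E]
    {f g : E → ℝ} {f' : E →L[ℝ] ℝ} {x : E} (hf : HasFDerivAt f f' x)
    (hg : DifferentiableAt ℝ g x) (hfx : f x = 0) (hgx : g x ≠ 0) :
    HasFDerivAt (fun y => f y / g y) ((g x)⁻¹ • f') x := by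
  have h := hf.fun_mul (hg.fun_inv hgx).hasFDerivAt
  simp only [hfx, zero_smul, zero_add] at h
  simpa only [div_eq_mul_inv] using h

namespace Real

theorem tan_ne_zero_of_sin_ne_zero_of_cos_ne_zero {x : ℝ} (hs : sin x ≠ 0) (hc : cos x ≠ 0) :
    tan x ≠ 0 := by
  rw [tan_eq_sin_div_cos]
  exact div_ne_zero hs hc

theorem arctan_inv_modEq {x : ℝ} (hx : x ≠ 0) : arctan x⁻¹ ≡ π / 2 - arctan x [PMOD π] := by
  rcases hx.lt_or_gt with hneg | hpos
  · rw [arctan_inv_of_neg hneg]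
    exact modEq_iff_eq_add_zsmul.mpr ⟨1, by simp; ring⟩
  · rw [arctan_inv_of_pos hpos]

theorem pi_sub_two_mul_arctan_inv_modEq {x : ℝ} (hx : x ≠ 0) :
    π - 2 * arctan x⁻¹ ≡ 2 * arctan x [PMOD π] := by
  have h := (((arctan_inv_modEq hx).nsmul (n := 2)).of_nsmul).sub_left π
  rwa [nsmul_eq_mul, nsmul_eq_mul, Nat.cast_ofNat,
    show π - 2 * (π / 2 - arctan x) = 2 * arctan x by ring] at h

theorem arctan_div_mul_modEq {a b t : ℝ} (ha : a ≠ 0) (hb : b ≠ 0) (ht : t ≠ 0) :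
    arctan (b / (a * t)) ≡ π / 2 - arctan (a / b * t) [PMOD π] := by
  rw [show b / (a * t) = (a / b * t)⁻¹ by field_simp]
  exact arctan_inv_modEq (by positivity)

end Real

namespace EllipticBilliard

noncomputable section

variable (a b : ℝ)

/-- `cos φ cos θ` times the numerator of the argument of `arctan` in the formula for `φ₁`. -/
def tanNum (p : ℝ × ℝ) : ℝ := b * (a * sin p.1 * cos p.2 + b * cos p.1 * sin p.2)

/-- `cos φ cos θ` times the denominator of the argument of `arctan` in the formula for `φ₁`. -/
def tanDen (p : ℝ × ℝ) : ℝ := a * (b * cos p.1 * cos p.2 - a * sin p.1 * sin p.2)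

def nextPhi (p : ℝ × ℝ) : ℝ := π - p.1 - 2 * arctan (tanDen a b p / tanNum a b p)

def nextTheta (p : ℝ × ℝ) : ℝ :=
  -p.2 - arctan (a / b * tan p.1) + arctan (a / b * tan (nextPhi a b p))

def sinNextPhiNum (p : ℝ × ℝ) : ℝ :=
  sin p.1 * (tanNum a b p ^ 2 - tanDen a b p ^ 2) + 2 * cos p.1 * tanNum a b p * tanDen a b p

/-- Where this is nonzero (and `tanNum`, `cos φ`, `cos (nextPhi)` are, as near `(0, π / 2)`),
all the side conditions of the formulas for `B_s` hold. -/
def nondegeneracy (p : ℝ × ℝ) : ℝ := sin p.1 * cos p.2 * tanDen a b p * sinNextPhiNum a b p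

def jacobian : ℝ × ℝ →L[ℝ] ℝ × ℝ :=
  ((2 * a ^ 2 / b ^ 2 - 1) • ContinuousLinearMap.fst ℝ ℝ ℝ
      + (2 * a / b) • ContinuousLinearMap.snd ℝ ℝ ℝ).prod
    ((2 * a * (a ^ 2 - b ^ 2) / b ^ 3) • ContinuousLinearMap.fst ℝ ℝ ℝ
      + (2 * a ^ 2 / b ^ 2 - 1) • ContinuousLinearMap.snd ℝ ℝ ℝ)

def PhiFormula (Bs : ℝ × ℝ → ℝ × ℝ) : Prop :=
  ∀ φ θ : ℝ, cos φ ≠ 0 → cos θ ≠ 0 → b - a * tan φ * tan θ ≠ 0 →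
    ∃ k : ℤ, (Bs (φ, θ)).1 =
      -φ + 2 * arctan (b * (a * tan φ + b * tan θ) / (a * (b - a * tan φ * tan θ))) + k * π

def ThetaFormula (Bs : ℝ × ℝ → ℝ × ℝ) : Prop :=
  ∀ φ θ : ℝ, cos φ ≠ 0 → cos θ ≠ 0 → b - a * tan φ * tan θ ≠ 0 → sin φ ≠ 0 →
    cos (Bs (φ, θ)).1 ≠ 0 → sin (Bs (φ, θ)).1 ≠ 0 →
    ∃ k : ℤ, (Bs (φ, θ)).2 =
      -θ + arctan (b / (a * tan φ)) - arctan (b / (a * tan (Bs (φ, θ)).1)) + k * π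

end

variable {a b : ℝ}

theorem tan_div_eq {φ θ : ℝ} (hφ : cos φ ≠ 0) (hθ : cos θ ≠ 0) :
    b * (a * tan φ + b * tan θ) / (a * (b - a * tan φ * tan θ)) =
      tanNum a b (φ, θ) / tanDen a b (φ, θ) := by
  have h : cos φ * cos θ ≠ 0 := mul_ne_zero hφ hθ
  conv_rhs => rw [← div_div_div_cancel_right₀ h]
  rw [tanNum, tanDen, tan_eq_sin_div_cos, tan_eq_sin_div_cos]
  congr 1 <;> field_simp

theorem sub_mul_tan_mul_tan_ne_zero (ha : a ≠ 0) {φ θ : ℝ} (hφ : cos φ ≠ 0) (hθ : cos θ ≠ 0)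
    (hD : tanDen a b (φ, θ) ≠ 0) : b - a * tan φ * tan θ ≠ 0 := by
  have h : b - a * tan φ * tan θ = tanDen a b (φ, θ) / (a * (cos φ * cos θ)) := by
    rw [tanDen, tan_eq_sin_div_cos, tan_eq_sin_div_cos]
    field_simp
  rw [h]
  exact div_ne_zero hD (by positivity)

theorem nextPhi_modEq {φ θ : ℝ} (hφ : cos φ ≠ 0) (hθ : cos θ ≠ 0)
    (hN : tanNum a b (φ, θ) ≠ 0) (hD : tanDen a b (φ, θ) ≠ 0) :
    nextPhi a b (φ, θ) ≡
      -φ + 2 * arctan (b * (a * tan φ + b * tan θ) / (a * (b - a * tan φ * tan θ))) [PMOD π] := by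
  have h := (pi_sub_two_mul_arctan_inv_modEq (div_ne_zero hN hD)).add_left (-φ)
  rw [inv_div] at h
  rw [tan_div_eq hφ hθ, nextPhi]
  convert h using 1
  ring

theorem nextTheta_modEq (ha : a ≠ 0) (hb : b ≠ 0) {φ θ φ₁ : ℝ} (hφ : tan φ ≠ 0)
    (hφ₁ : tan φ₁ ≠ 0) (htan : tan φ₁ = tan (nextPhi a b (φ, θ))) :
    nextTheta a b (φ, θ) ≡
      -θ + arctan (b / (a * tan φ)) - arctan (b / (a * tan φ₁)) [PMOD π] := by
  have h := ((arctan_div_mul_modEq ha hb hφ).add_left (-θ)).sub (arctan_div_mul_modEq ha hb hφ₁)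
  rwa [nextTheta, ← htan, show -θ - arctan (a / b * tan φ) + arctan (a / b * tan φ₁) =
    -θ + (π / 2 - arctan (a / b * tan φ)) - (π / 2 - arctan (a / b * tan φ₁)) by ring,
    modEq_comm]

theorem sin_nextPhi {p : ℝ × ℝ} (hN : tanNum a b p ≠ 0) :
    sin (nextPhi a b p) = sinNextPhiNum a b p / (tanNum a b p ^ 2 + tanDen a b p ^ 2) := by
  rw [nextPhi]
  set Y := tanDen a b p / tanNum a b p with hY
  have hcos : cos (arctan Y) ^ 2 = 1 / (1 + Y ^ 2) := cos_sq_arctan Y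
  have hsin : sin (arctan Y) = Y * cos (arctan Y) := by
    rw [sin_arctan, cos_arctan]
    field_simp
  rw [sub_sub, sin_pi_sub, sin_add, sin_two_mul, cos_two_mul, hsin,
    show 2 * (Y * cos (arctan Y)) * cos (arctan Y) = 2 * Y * cos (arctan Y) ^ 2 by ring, hcos,
    sinNextPhiNum, hY]
  field_simp
  ring

theorem nondegeneracy_ne_zero_iff {p : ℝ × ℝ} : nondegeneracy a b p ≠ 0 ↔
    sin p.1 ≠ 0 ∧ cos p.2 ≠ 0 ∧ tanDen a b p ≠ 0 ∧ sinNextPhiNum a b p ≠ 0 := by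
  simp only [nondegeneracy, ne_eq, mul_eq_zero, not_or, and_assoc]

theorem nondegeneracy_pi_div_two_pi_div_four_ne_zero (ha : a ≠ 0) (hab : a ^ 2 ≠ b ^ 2) :
    nondegeneracy a b (π / 2, π / 4) ≠ 0 := by
  simp only [nondegeneracy, sinNextPhiNum, tanNum, tanDen, sin_pi_div_two, cos_pi_div_two,
    sin_pi_div_four, cos_pi_div_four]
  have h2 : √2 ^ 2 = 2 := sq_sqrt zero_le_two
  have hsq : a ^ 4 * (a ^ 2 - b ^ 2) ≠ 0 := mul_ne_zero (pow_ne_zero 4 ha) (sub_ne_zero.mpr hab)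
  intro h
  apply hsq
  linear_combination 4 * h - a ^ 4 * (a ^ 2 - b ^ 2) * (√2 ^ 2 + 2) / 4 * h2

theorem dense_setOf_nondegeneracy_ne_zero (ha : a ≠ 0) (hab : a ^ 2 ≠ b ^ 2) :
    Dense {p | nondegeneracy a b p ≠ 0} := by
  refine AnalyticOnNhd.dense_setOf_ne_zero (𝕜 := ℝ) (fun p _ => ?_)
    (nondegeneracy_pi_div_two_pi_div_four_ne_zero ha hab)
  have := analyticAt_fst (𝕜 := ℝ) (E := ℝ) (F := ℝ) (p := p)
  have := analyticAt_snd (𝕜 := ℝ) (E := ℝ) (F := ℝ) (p := p)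
  unfold nondegeneracy sinNextPhiNum tanNum tanDen
  fun_prop

theorem nextPhi_modEq_fst {Bs : ℝ × ℝ → ℝ × ℝ} (hPhi : PhiFormula a b Bs) (ha : a ≠ 0)
    {p : ℝ × ℝ} (hN : tanNum a b p ≠ 0) (hφ : cos p.1 ≠ 0) (hp : nondegeneracy a b p ≠ 0) :
    nextPhi a b p ≡ (Bs p).1 [PMOD π] := by
  obtain ⟨-, hθ, hD, -⟩ := nondegeneracy_ne_zero_iff.mp hp
  obtain ⟨k, hk⟩ := hPhi p.1 p.2 hφ hθ (sub_mul_tan_mul_tan_ne_zero ha hφ hθ hD)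
  exact (nextPhi_modEq hφ hθ hN hD).trans (modEq_iff_eq_add_zsmul.mpr ⟨k, by simpa using hk⟩)

theorem nextTheta_modEq_snd {Bs : ℝ × ℝ → ℝ × ℝ} (hTheta : ThetaFormula a b Bs) (ha : a ≠ 0)
    (hb : b ≠ 0) {p : ℝ × ℝ} (hN : tanNum a b p ≠ 0) (hφ : cos p.1 ≠ 0)
    (hφ₁ : cos (nextPhi a b p) ≠ 0) (hp : nondegeneracy a b p ≠ 0) {m : ℤ}
    (hm : (Bs p).1 = nextPhi a b p + m * π) : nextTheta a b p ≡ (Bs p).2 [PMOD π] := by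
  obtain ⟨hsφ, hθ, hD, hW⟩ := nondegeneracy_ne_zero_iff.mp hp
  have hsφ₁ : sin (nextPhi a b p) ≠ 0 := by
    rw [sin_nextPhi hN]
    exact div_ne_zero hW (by positivity)
  have hcB : cos (Bs p).1 ≠ 0 := by
    rw [hm, cos_add_int_mul_pi]
    exact mul_ne_zero (zpow_ne_zero _ (by norm_num)) hφ₁
  have hsB : sin (Bs p).1 ≠ 0 := by
    rw [hm, sin_add_int_mul_pi]
    exact mul_ne_zero (zpow_ne_zero _ (by norm_num)) hsφ₁
  have htan : tan (Bs p).1 = tan (nextPhi a b p) := by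
    rw [hm, tan_periodic.int_mul m]
  obtain ⟨k, hk⟩ :=
    hTheta p.1 p.2 hφ hθ (sub_mul_tan_mul_tan_ne_zero ha hφ hθ hD) hsφ hcB hsB
  exact (nextTheta_modEq ha hb (tan_ne_zero_of_sin_ne_zero_of_cos_ne_zero hsφ hφ)
    (tan_ne_zero_of_sin_ne_zero_of_cos_ne_zero hsB hcB) htan).trans
    (modEq_iff_eq_add_zsmul.mpr ⟨k, by simpa using hk⟩)

theorem tanNum_zero_pi_div_two : tanNum a b (0, π / 2) = b ^ 2 := by simp [tanNum, sq]

theorem tanDen_zero_pi_div_two : tanDen a b (0, π / 2) = 0 := by simp [tanDen]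

theorem nextPhi_zero_pi_div_two : nextPhi a b (0, π / 2) = π := by
  simp [nextPhi, tanDen_zero_pi_div_two]

theorem nextTheta_zero_pi_div_two : nextTheta a b (0, π / 2) = -(π / 2) := by
  simp [nextTheta, nextPhi_zero_pi_div_two]

theorem differentiable_tanNum : Differentiable ℝ (tanNum a b) := by
  unfold tanNum
  fun_prop

theorem hasFDerivAt_tanDen_zero_pi_div_two :
    HasFDerivAt (tanDen a b)
      ((-a ^ 2) • ContinuousLinearMap.fst ℝ ℝ ℝ + (-(a * b)) • ContinuousLinearMap.snd ℝ ℝ ℝ)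
      (0, π / 2) := by
  have hφ := hasFDerivAt_fst (𝕜 := ℝ) (E := ℝ) (F := ℝ) (p := ((0 : ℝ), π / 2))
  have hθ := hasFDerivAt_snd (𝕜 := ℝ) (E := ℝ) (F := ℝ) (p := ((0 : ℝ), π / 2))
  have h := (((hφ.cos.const_mul b).mul hθ.cos).sub ((hφ.sin.const_mul a).mul hθ.sin)).const_mul a
  refine h.congr_fderiv ?_
  ext <;> simp; ring

theorem hasFDerivAt_nextPhi_zero_pi_div_two (hb : b ≠ 0) :
    HasFDerivAt (nextPhi a b)
      ((2 * a ^ 2 / b ^ 2 - 1) • ContinuousLinearMap.fst ℝ ℝ ℝ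
        + (2 * a / b) • ContinuousLinearMap.snd ℝ ℝ ℝ) (0, π / 2) := by
  have hφ := hasFDerivAt_fst (𝕜 := ℝ) (E := ℝ) (F := ℝ) (p := ((0 : ℝ), π / 2))
  have hN : tanNum a b (0, π / 2) ≠ 0 := by
    rw [tanNum_zero_pi_div_two]
    exact pow_ne_zero 2 hb
  have hq := (hasFDerivAt_tanDen_zero_pi_div_two (a := a) (b := b)).div_of_eq_zero
    differentiable_tanNum.differentiableAt tanDen_zero_pi_div_two hN
  have h := ((hasFDerivAt_const π (0, π / 2)).sub hφ).sub (hq.arctan.const_mul 2)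
  refine h.congr_fderiv ?_
  ext <;> simp [tanDen_zero_pi_div_two, tanNum_zero_pi_div_two] <;> field_simp; ring

theorem hasFDerivAt_nextTheta_zero_pi_div_two (hb : b ≠ 0) :
    HasFDerivAt (nextTheta a b)
      ((2 * a * (a ^ 2 - b ^ 2) / b ^ 3) • ContinuousLinearMap.fst ℝ ℝ ℝ
        + (2 * a ^ 2 / b ^ 2 - 1) • ContinuousLinearMap.snd ℝ ℝ ℝ) (0, π / 2) := by
  have hφ := hasFDerivAt_fst (𝕜 := ℝ) (E := ℝ) (F := ℝ) (p := ((0 : ℝ), π / 2))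
  have hθ := hasFDerivAt_snd (𝕜 := ℝ) (E := ℝ) (F := ℝ) (p := ((0 : ℝ), π / 2))
  have h1 := ((hasDerivAt_tan (by simp)).comp_hasFDerivAt (0, π / 2) hφ).const_mul (a / b)
  have h2 := ((hasDerivAt_tan (by simp [nextPhi_zero_pi_div_two])).comp_hasFDerivAt (0, π / 2)
    (hasFDerivAt_nextPhi_zero_pi_div_two (a := a) hb)).const_mul (a / b)
  have h := (hθ.neg.sub h1.arctan).add h2.arctan
  refine h.congr_fderiv ?_
  ext <;> simp [nextPhi_zero_pi_div_two] <;> field_simp <;> ring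

theorem hasFDerivAt_nextPhi_nextTheta_add (hb : b ≠ 0) (m n : ℤ) :
    HasFDerivAt (fun p => (nextPhi a b p + m * π, nextTheta a b p + n * π)) (jacobian a b)
      ((0 : ℝ), π / 2) :=
  ((hasFDerivAt_nextPhi_zero_pi_div_two hb).add_const _).prodMk
    ((hasFDerivAt_nextTheta_zero_pi_div_two hb).add_const _)

theorem continuousAt_nextPhi {p : ℝ × ℝ} (hN : tanNum a b p ≠ 0) :
    ContinuousAt (nextPhi a b) p := by
  unfold nextPhi tanNum tanDen at *
  fun_prop (disch := assumption)

theorem continuousAt_nextTheta {p : ℝ × ℝ} (hN : tanNum a b p ≠ 0) (hφ : cos p.1 ≠ 0)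
    (hφ₁ : cos (nextPhi a b p) ≠ 0) : ContinuousAt (nextTheta a b) p :=
  ((continuousAt_snd.neg.sub (continuous_arctan.continuousAt.comp
    (continuousAt_const.mul ((continuousAt_tan.mpr hφ).comp continuousAt_fst)))).add
    (continuous_arctan.continuousAt.comp
      (continuousAt_const.mul ((continuousAt_tan.mpr hφ₁).comp (continuousAt_nextPhi hN)))))

theorem eventually_tanNum_ne_zero_and_cos_ne_zero (hb : b ≠ 0) :
    ∀ᶠ p in 𝓝 ((0 : ℝ), π / 2), tanNum a b p ≠ 0 ∧ cos p.1 ≠ 0 ∧ cos (nextPhi a b p) ≠ 0 :=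
  (differentiable_tanNum.continuous.continuousAt.eventually_ne
      (by rw [tanNum_zero_pi_div_two]; exact pow_ne_zero 2 hb)).and <|
    ((continuous_cos.comp continuous_fst).continuousAt.eventually_ne (by simp)).and
      ((continuous_cos.continuousAt.comp
        (hasFDerivAt_nextPhi_zero_pi_div_two hb).continuousAt).eventually_ne
          (by simp [nextPhi_zero_pi_div_two]))

theorem exists_eventuallyEq_nextPhi_nextTheta {Bs : ℝ × ℝ → ℝ × ℝ} (ha : a ≠ 0) (hb : b ≠ 0)
    (hab : a ^ 2 ≠ b ^ 2) (hcont : Continuous Bs) (hPhi : PhiFormula a b Bs)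
    (hTheta : ThetaFormula a b Bs) : ∃ m n : ℤ,
      Bs =ᶠ[𝓝 ((0 : ℝ), π / 2)] fun p => (nextPhi a b p + m * π, nextTheta a b p + n * π) := by
  obtain ⟨r, hr, hU⟩ := Metric.eventually_nhds_iff_ball.mp
    (eventually_tanNum_ne_zero_and_cos_ne_zero (a := a) hb)
  choose hN hφ hφ₁ using hU
  have hUc := (convex_ball ((0 : ℝ), π / 2) r).isPreconnected
  have hS := dense_setOf_nondegeneracy_ne_zero ha hab
  obtain ⟨m, hm⟩ := hUc.exists_int_forall_eq_add_mul_of_modEq Metric.isOpen_ball hS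
    hcont.fst.continuousOn (fun p hp => (continuousAt_nextPhi (hN p hp)).continuousWithinAt)
    fun p ⟨hpU, hpS⟩ => nextPhi_modEq_fst hPhi ha (hN p hpU) (hφ p hpU) hpS
  obtain ⟨n, hn⟩ := hUc.exists_int_forall_eq_add_mul_of_modEq Metric.isOpen_ball hS
    hcont.snd.continuousOn
    (fun p hp => (continuousAt_nextTheta (hN p hp) (hφ p hp) (hφ₁ p hp)).continuousWithinAt)
    fun p ⟨hpU, hpS⟩ => nextTheta_modEq_snd hTheta ha hb (hN p hpU) (hφ p hpU) (hφ₁ p hpU) hpS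
      (hm p hpU)
  exact ⟨m, n, eventually_of_mem (Metric.ball_mem_nhds _ hr) fun p hp =>
    Prod.ext (hm p hp) (hn p hp)⟩

theorem jacobian_apply_eigenvector {c : ℝ} (hb : b ≠ 0) (hac : a - c ≠ 0)
    (hc : c ^ 2 = a ^ 2 - b ^ 2) : jacobian a b (b, c) = ((a + c) / (a - c)) • (b, c) := by
  have hb2 : b ^ 2 = (a - c) * (a + c) := by linear_combination hc
  simp only [jacobian, ContinuousLinearMap.prod_apply, add_apply, smul_apply,
    ContinuousLinearMap.coe_fst', ContinuousLinearMap.coe_snd',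
    smul_eq_mul, Prod.smul_mk, Prod.mk.injEq]
  constructor
  · field_simp
    linear_combination (-2 * a) * hb2
  · field_simp
    linear_combination (-2 * a ^ 2) * hb2

theorem hasEigenvalue_jacobian {c : ℝ} (hb : b ≠ 0) (hac : a - c ≠ 0)
    (hc : c ^ 2 = a ^ 2 - b ^ 2) :
    Module.End.HasEigenvalue (jacobian a b).toLinearMap ((a + c) / (a - c)) :=
  Module.End.hasEigenvalue_of_hasEigenvector
    ⟨Module.End.mem_eigenspace_iff.mpr (jacobian_apply_eigenvector hb hac hc),
      fun h => hb (congrArg Prod.fst h)⟩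

end EllipticBilliard

open EllipticBilliard

/-- the point `z = (0, π/2)` (motion along the major axis, `φ` taken
modulo `π`) is a fixed point of the static elliptic billiard map `B_s`, `B_s` is
differentiable at `z` and the differential there has eigenvalues
`λ = (a+c)/(a−c) > 1` and `λ⁻¹ < 1`, so `z` is a hyperbolic saddle.  Here `Bs` is
any continuous extension of the map given, modulo `π`, by the defining formulas of
the static elliptic billiard map. -/
theorem major_axis_saddle_fixed_point
    (a b : ℝ) (hb : 0 < b) (hab : b < a)
    (c lam : ℝ) (hc : c = Real.sqrt (a ^ 2 - b ^ 2)) (hlam : lam = (a + c) / (a - c))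
    (Bs : ℝ × ℝ → ℝ × ℝ) (hcont : Continuous Bs)
    (hBs1 : ∀ φ θ : ℝ, Real.cos φ ≠ 0 → Real.cos θ ≠ 0 →
      b - a * Real.tan φ * Real.tan θ ≠ 0 →
      ∃ k : ℤ, (Bs (φ, θ)).1 = -φ + 2 * Real.arctan (b * (a * Real.tan φ + b * Real.tan θ) /
        (a * (b - a * Real.tan φ * Real.tan θ))) + k * Real.pi)
    (hBs2 : ∀ φ θ : ℝ, Real.cos φ ≠ 0 → Real.cos θ ≠ 0 →
      b - a * Real.tan φ * Real.tan θ ≠ 0 → Real.sin φ ≠ 0 →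
      Real.cos ((Bs (φ, θ)).1) ≠ 0 → Real.sin ((Bs (φ, θ)).1) ≠ 0 →
      ∃ k : ℤ, (Bs (φ, θ)).2 = -θ + Real.arctan (b / (a * Real.tan φ))
        - Real.arctan (b / (a * Real.tan ((Bs (φ, θ)).1))) + k * Real.pi) :
    (∃ k l : ℤ, Bs (0, Real.pi / 2) = ((k : ℝ) * Real.pi, Real.pi / 2 + l * Real.pi)) ∧
    1 < lam ∧ lam⁻¹ < 1 ∧
    ∃ D : ℝ × ℝ →L[ℝ] ℝ × ℝ, HasFDerivAt Bs D (0, Real.pi / 2) ∧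
      Module.End.HasEigenvalue D.toLinearMap lam ∧
      Module.End.HasEigenvalue D.toLinearMap lam⁻¹ := by
  have ha : 0 < a := hb.trans hab
  have hc2 : c ^ 2 = a ^ 2 - b ^ 2 := by rw [hc, sq_sqrt (by nlinarith)]
  have hc0 : 0 < c := by rw [hc]; exact sqrt_pos.mpr (by nlinarith)
  have hca : c < a := by nlinarith
  have hlam1 : 1 < lam := by rw [hlam, one_lt_div (by linarith)]; linarith
  have hlaminv : lam⁻¹ = (a + -c) / (a - -c) := by rw [hlam, inv_div]; ring
  obtain ⟨m, n, hloc⟩ := exists_eventuallyEq_nextPhi_nextTheta ha.ne' hb.ne'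
    (by nlinarith) hcont hBs1 hBs2
  refine ⟨⟨m + 1, n - 1, ?_⟩, hlam1, inv_lt_one_of_one_lt₀ hlam1, jacobian a b,
    (hasFDerivAt_nextPhi_nextTheta_add hb.ne' m n).congr_of_eventuallyEq hloc, ?_, ?_⟩
  · rw [hloc.eq_of_nhds, nextPhi_zero_pi_div_two, nextTheta_zero_pi_div_two]
    push_cast
    ext <;> ring
  · rw [hlam]
    exact hasEigenvalue_jacobian hb.ne' (by linarith) hc2
  · rw [hlaminv]
    exact hasEigenvalue_jacobian hb.ne' (by linarith) (by rw [neg_sq, hc2])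
end

section
/- Twist property of the time-1 map of the inner Hamiltonian flow (Proposition 4.1, core estimate): let a : ℝ → ℝ be a continuous, strictly positive, periodic function. For every E > 0 and t ∈ ℝ there is a unique t̄ = t̄(E, t) > t satisfying sqrt(E/2) · a(t) · ∫_t^{t̄} a(s)^{−2} ds = 1, the function E ↦ t̄(E, t) is differentiable, and ∂t̄/∂E < 0. -/
/-!
With `f = a⁻²`, the defining relation says `∫_t^{t̄} f = c(E) := (√(E/2) · a(t))⁻¹`. Since `f` is
continuous, positive and periodic, the primitive `F(x) = ∫_t^x f` is an increasing bijection of `ℝ`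
with derivative `f > 0`, so `t̄ = F⁻¹(c(E))` exists, is unique, lies to the right of `t` because
`c(E) > 0`, and is differentiable with `∂t̄/∂E = c'(E) / f(t̄) < 0` because `c` is decreasing.
-/

open Filter Topology MeasureTheory intervalIntegral

section Primitive

variable {f : ℝ → ℝ}

theorem strictMono_integral_of_pos (hf : Continuous f) (hpos : ∀ x, 0 < f x) (t : ℝ) :
    StrictMono fun x => ∫ s in t..x, f s := by
  intro x y hxy
  have hint (u v : ℝ) : IntervalIntegrable f volume u v := hf.intervalIntegrable u v
  have hadd := integral_add_adjacent_intervals (hint t x) (hint x y)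
  have hxy_pos := intervalIntegral_pos_of_pos (hint x y) hpos hxy
  dsimp only
  linarith

theorem lt_of_integral_pos (hf : Continuous f) (hpos : ∀ x, 0 < f x) {t x : ℝ}
    (h : 0 < ∫ s in t..x, f s) : t < x := by
  rw [← integral_same (f := f) (a := t)] at h
  exact (strictMono_integral_of_pos hf hpos t).lt_iff_lt.1 h

theorem surjective_integral_of_periodic (hf : Continuous f) (hpos : ∀ x, 0 < f x) {P : ℝ}
    (hP : 0 < P) (hper : Function.Periodic f P) (t : ℝ) :
    Function.Surjective fun x => ∫ s in t..x, f s := by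
  have hint (u v : ℝ) : IntervalIntegrable f volume u v := hf.intervalIntegrable u v
  have hshift : (fun x => ∫ s in t..x, f s) =
      fun x => (∫ s in (0 : ℝ)..x, f s) - ∫ s in (0 : ℝ)..t, f s := by
    funext x
    have := integral_add_adjacent_intervals (hint 0 t) (hint t x)
    linarith
  have htop := hper.tendsto_atTop_intervalIntegral_of_pos' (hint 0 P) hpos hP
  have hbot := hper.tendsto_atBot_intervalIntegral_of_pos' (hint 0 P) hpos hP
  refine (continuous_primitive hint t).surjective ?_ ?_
  · rw [hshift]; exact htop.atTop_add tendsto_const_nhds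
  · rw [hshift]; exact hbot.atBot_add tendsto_const_nhds

variable {P : ℝ}

noncomputable def integralOrderIso (hf : Continuous f) (hpos : ∀ x, 0 < f x) (hP : 0 < P)
    (hper : Function.Periodic f P) (t : ℝ) : ℝ ≃o ℝ :=
  StrictMono.orderIsoOfSurjective _ (strictMono_integral_of_pos hf hpos t)
    (surjective_integral_of_periodic hf hpos hP hper t)

theorem existsUnique_integral_eq (hf : Continuous f) (hpos : ∀ x, 0 < f x) (hP : 0 < P)
    (hper : Function.Periodic f P) (t y : ℝ) : ∃! x, ∫ s in t..x, f s = y :=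
  (integralOrderIso hf hpos hP hper t).bijective.existsUnique y

theorem hasDerivAt_of_integral_eq (hf : Continuous f) (hpos : ∀ x, 0 < f x) (hP : 0 < P)
    (hper : Function.Periodic f P) {t E c' : ℝ} {T c : ℝ → ℝ} (hc : HasDerivAt c c' E)
    (hT : ∀ᶠ E' in 𝓝 E, ∫ s in t..T E', f s = c E') : HasDerivAt T (c' / f (T E)) E := by
  set e := integralOrderIso hf hpos hP hper t
  have hTe : T =ᶠ[𝓝 E] fun E' => e.symm (c E') := by
    filter_upwards [hT] with E' hE'
    exact e.injective (by rw [e.apply_symm_apply]; exact hE')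
  have hinv : HasDerivAt e.symm (f (e.symm (c E)))⁻¹ (c E) :=
    HasDerivAt.of_local_left_inverse e.symm.continuous.continuousAt
      (hf.integral_hasStrictDerivAt t _).hasDerivAt (hpos _).ne'
      (Eventually.of_forall e.apply_symm_apply)
  rw [hTe.eq_of_nhds, div_eq_inv_mul]
  exact (hinv.comp E hc).congr_of_eventuallyEq hTe

end Primitive

theorem exists_neg_hasDerivAt_inv_sqrt_half_mul {k E : ℝ} (hk : 0 < k) (hE : 0 < E) :
    ∃ d < 0, HasDerivAt (fun E => (Real.sqrt (E / 2) * k)⁻¹) d E := by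
  have hsqrt : 0 < Real.sqrt (E / 2) := Real.sqrt_pos.2 (half_pos hE)
  have h : HasDerivAt (fun E => Real.sqrt (E / 2) * k)
      (1 / (2 * Real.sqrt (E / 2)) * (1 / 2) * k) E :=
    ((Real.hasDerivAt_sqrt (half_pos hE).ne').comp E ((hasDerivAt_id E).div_const 2)).mul_const k
  exact ⟨_, div_neg_of_neg_of_pos (neg_neg_of_pos (by positivity)) (by positivity),
    h.inv (by positivity)⟩

/-- twist property of the time-1 map of the inner Hamiltonian flow.
For a continuous, strictly positive, periodic function `a`, for every `E > 0` and
`t` there is a unique `t̄ > t` with `sqrt(E/2) · a(t) · ∫_t^{t̄} a(s)⁻² ds = 1`;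
the function `E ↦ t̄(E, t)` is differentiable and `∂t̄/∂E < 0`. -/
theorem inner_map_twist
    (a : ℝ → ℝ) (ha : Continuous a) (hapos : ∀ t, 0 < a t)
    (P : ℝ) (hP : 0 < P) (haper : Function.Periodic a P) :
    (∀ E : ℝ, 0 < E → ∀ t : ℝ,
      ∃! tb : ℝ, t < tb ∧ Real.sqrt (E / 2) * a t * ∫ s in t..tb, (a s ^ 2)⁻¹ = 1) ∧
    (∀ (t : ℝ) (T : ℝ → ℝ),
      (∀ E : ℝ, 0 < E →
        t < T E ∧ Real.sqrt (E / 2) * a t * ∫ s in t..(T E), (a s ^ 2)⁻¹ = 1) →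
      ∀ E : ℝ, 0 < E → ∃ d : ℝ, d < 0 ∧ HasDerivAt T d E) := by
  have hfpos : ∀ s, 0 < (a s ^ 2)⁻¹ := fun s => by have := hapos s; positivity
  have hf : Continuous fun s => (a s ^ 2)⁻¹ := (ha.pow 2).inv₀ fun s => (pow_pos (hapos s) 2).ne'
  have hfper : Function.Periodic (fun s => (a s ^ 2)⁻¹) P := fun s => by simp only [haper s]
  have hcoef {E : ℝ} (hE : 0 < E) (t : ℝ) : 0 < Real.sqrt (E / 2) * a t :=
    mul_pos (Real.sqrt_pos.2 (half_pos hE)) (hapos t)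
  have hrel {E : ℝ} (hE : 0 < E) (t x : ℝ) :
      Real.sqrt (E / 2) * a t * ∫ s in t..x, (a s ^ 2)⁻¹ = 1 ↔
        ∫ s in t..x, (a s ^ 2)⁻¹ = (Real.sqrt (E / 2) * a t)⁻¹ :=
    (mul_eq_one_iff_inv_eq₀ (hcoef hE t).ne').trans eq_comm
  refine ⟨fun E hE t => ?_, fun t T hT E hE => ?_⟩
  · obtain ⟨tb, htb, huniq⟩ :=
      existsUnique_integral_eq hf hfpos hP hfper t (Real.sqrt (E / 2) * a t)⁻¹
    have hlt : t < tb := lt_of_integral_pos hf hfpos (htb ▸ inv_pos.2 (hcoef hE t))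
    exact ⟨tb, ⟨hlt, (hrel hE t tb).2 htb⟩, fun y hy => huniq y ((hrel hE t y).1 hy.2)⟩
  · obtain ⟨d, hd, hc⟩ := exists_neg_hasDerivAt_inv_sqrt_half_mul (hapos t) hE
    refine ⟨d / (a (T E) ^ 2)⁻¹, div_neg_of_neg_of_pos hd (hfpos _),
      hasDerivAt_of_integral_eq hf hfpos hP hfper (t := t) hc ?_⟩
    filter_upwards [Ioi_mem_nhds hE] with E' hE' using (hrel hE' t (T E')).1 (hT E' hE').2
end

section
/- Flow-time formula along level curves of the inner Hamiltonian: let a : ℝ → ℝ be C¹ and strictly positive, and let (t(s), E(s)) be a differentiable solution of dt/ds = sqrt(2) a(t)/sqrt(E), dE/ds = −2 sqrt(2E) a'(t) with E(s) > 0, defined for s ∈ [s₀, s₁]. Then s₁ − s₀ = sqrt(E(s₀)/2) · a(t(s₀)) · ∫_{t(s₀)}^{t(s₁)} a(τ)^{−2} dτ. -/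
/-!
Along the flow the inner Hamiltonian `2 √(2E) a(t)` is conserved, i.e. `√E · a(t) = c` with
`c = √(E s₀) a(t s₀)`. Substituting `√E = c / a(t)` into the equation for `t` gives
`dt/ds = √2 a(t)² / c`, so `s ↦ ∫_{t s₀}^{t s} a⁻²` has constant derivative `√2 / c`, and
`s₁ - s₀ = (c / √2) ∫_{t s₀}^{t s₁} a⁻² = √(E s₀ / 2) a(t s₀) ∫_{t s₀}^{t s₁} a⁻²`.
-/

open Set

theorem eq_of_hasDerivWithinAt_Icc_eq {f g f' : ℝ → ℝ} {a b : ℝ}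
    (hf : ∀ x ∈ Icc a b, HasDerivWithinAt f (f' x) (Icc a b) x)
    (hg : ∀ x ∈ Icc a b, HasDerivWithinAt g (f' x) (Icc a b) x) (hfg : f a = g a) :
    ∀ x ∈ Icc a b, f x = g x :=
  eq_of_has_deriv_right_eq
    (fun x hx => (hf x (Ico_subset_Icc_self hx)).mono_of_mem_nhdsWithin (Icc_mem_nhdsGE_of_mem hx))
    (fun x hx => (hg x (Ico_subset_Icc_self hx)).mono_of_mem_nhdsWithin (Icc_mem_nhdsGE_of_mem hx))
    (fun x hx => (hf x hx).continuousWithinAt) (fun x hx => (hg x hx).continuousWithinAt) hfg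

theorem integral_comp_eq_of_hasDerivWithinAt {f t t' : ℝ → ℝ} {k s₀ s₁ : ℝ} (hf : Continuous f)
    (hs : s₀ ≤ s₁) (ht : ∀ s ∈ Icc s₀ s₁, HasDerivWithinAt t (t' s) (Icc s₀ s₁) s)
    (hk : ∀ s ∈ Icc s₀ s₁, f (t s) * t' s = k) :
    ∫ τ in t s₀..t s₁, f τ = k * (s₁ - s₀) := by
  have hprim : ∀ x, HasDerivAt (fun y => ∫ τ in t s₀..y, f τ) (f x) x := fun x =>
    intervalIntegral.integral_hasDerivAt_right (hf.intervalIntegrable _ _)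
      (hf.stronglyMeasurableAtFilter _ _) hf.continuousAt
  refine eq_of_hasDerivWithinAt_Icc_eq (f' := fun _ => k)
    (fun s hsmem => ((hprim (t s)).comp_hasDerivWithinAt s (ht s hsmem)).congr_deriv (hk s hsmem))
    (fun s _ => by simpa using ((hasDerivWithinAt_id s _).sub_const s₀).const_mul k)
    (by simp) s₁ ⟨hs, le_rfl⟩

section InnerFlow

variable {a t E : ℝ → ℝ} {s₀ s₁ : ℝ}

theorem sqrt_mul_comp_eq_of_inner_flow (ha : Differentiable ℝ a)
    (hEpos : ∀ s ∈ Icc s₀ s₁, 0 < E s)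
    (ht : ∀ s ∈ Icc s₀ s₁,
      HasDerivWithinAt t (Real.sqrt 2 * a (t s) / Real.sqrt (E s)) (Icc s₀ s₁) s)
    (hE : ∀ s ∈ Icc s₀ s₁,
      HasDerivWithinAt E (-2 * Real.sqrt (2 * E s) * deriv a (t s)) (Icc s₀ s₁) s) :
    ∀ s ∈ Icc s₀ s₁, Real.sqrt (E s) * a (t s) = Real.sqrt (E s₀) * a (t s₀) := by
  refine eq_of_hasDerivWithinAt_Icc_eq (f' := fun _ => 0) (fun s hs => ?_)
    (fun s _ => hasDerivWithinAt_const s _ _) rfl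
  have hsqrtE := (Real.hasDerivAt_sqrt (hEpos s hs).ne').comp_hasDerivWithinAt s (hE s hs)
  have hat := (ha (t s)).hasDerivAt.comp_hasDerivWithinAt s (ht s hs)
  refine (hsqrtE.mul hat).congr_deriv ?_
  have hsqrt_pos : 0 < Real.sqrt (E s) := Real.sqrt_pos.mpr (hEpos s hs)
  rw [Real.sqrt_mul zero_le_two, Function.comp_apply, Function.comp_apply]
  field_simp
  ring

end InnerFlow

/-- flow-time formula along level curves of the inner Hamiltonian.
For a solution `(t(s), E(s))`, `s ∈ [s₀, s₁]`, of `dt/ds = sqrt 2 · a(t)/sqrt E`,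
`dE/ds = −2 sqrt(2E) a'(t)` with `E > 0`, one has
`s₁ − s₀ = sqrt(E(s₀)/2) · a(t(s₀)) · ∫_{t(s₀)}^{t(s₁)} a(τ)⁻² dτ`. -/
theorem inner_flow_time_formula
    (a : ℝ → ℝ) (ha : ContDiff ℝ 1 a) (hapos : ∀ τ, 0 < a τ)
    (s₀ s₁ : ℝ) (hs : s₀ ≤ s₁)
    (t E : ℝ → ℝ)
    (hEpos : ∀ s ∈ Set.Icc s₀ s₁, 0 < E s)
    (ht : ∀ s ∈ Set.Icc s₀ s₁,
      HasDerivWithinAt t (Real.sqrt 2 * a (t s) / Real.sqrt (E s)) (Set.Icc s₀ s₁) s)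
    (hE : ∀ s ∈ Set.Icc s₀ s₁,
      HasDerivWithinAt E (-2 * Real.sqrt (2 * E s) * deriv a (t s)) (Set.Icc s₀ s₁) s) :
    s₁ - s₀ = Real.sqrt (E s₀ / 2) * a (t s₀) * ∫ τ in (t s₀)..(t s₁), (a τ ^ 2)⁻¹ := by
  have hE₀ : 0 < E s₀ := hEpos s₀ ⟨le_rfl, hs⟩
  have hconserved := sqrt_mul_comp_eq_of_inner_flow (ha.differentiable one_ne_zero) hEpos ht hE
  have hspeed : ∀ s ∈ Icc s₀ s₁,
      (a (t s) ^ 2)⁻¹ * (Real.sqrt 2 * a (t s) / Real.sqrt (E s))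
        = Real.sqrt 2 / (Real.sqrt (E s₀) * a (t s₀)) := by
    intro s hsmem
    have hsqrt_pos : 0 < Real.sqrt (E s) := Real.sqrt_pos.mpr (hEpos s hsmem)
    have hap := hapos (t s)
    rw [← hconserved s hsmem]
    field_simp
  have hcont : Continuous fun τ => (a τ ^ 2)⁻¹ :=
    (ha.continuous.pow 2).inv₀ fun τ => (pow_pos (hapos τ) 2).ne'
  have hsqrt_pos : 0 < Real.sqrt (E s₀) := Real.sqrt_pos.mpr hE₀
  have hap := hapos (t s₀)
  rw [integral_comp_eq_of_hasDerivWithinAt hcont hs ht hspeed, Real.sqrt_div hE₀.le]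
  field_simp
end

section
/- For every real λ > 1 and x > 0, the doubly infinite series ∑_{n ∈ ℤ} λ^{2n} x / ( (λ^{2n} x + λ²)(λ^{2n} x + 1) ) converges absolutely and its sum equals 1/(λ² − 1). -/
/-!
With `q = λ²` the `n`-th term is `(g (n - 1) - g n) / (q - 1)` for `g n = 1 / (qⁿ x + 1)`, which
decreases from `1` (at `-∞`) to `0` (at `+∞`). So the series telescopes to `1 / (q - 1)`, and
since its terms are nonnegative it converges unconditionally.
-/

open Filter Topology

theorem Antitone.hasSum_int_sub {f : ℤ → ℝ} (hf : Antitone f) {a b : ℝ}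
    (ha : Tendsto f atBot (𝓝 a)) (hb : Tendsto f atTop (𝓝 b)) :
    HasSum (fun n => f (n - 1) - f n) (a - b) := by
  have hnonneg : ∀ n, 0 ≤ f (n - 1) - f n := fun n => sub_nonneg.2 (hf (by omega))
  have hnat : HasSum (fun k : ℕ => f ((k : ℤ) - 1) - f k) (f (-1) - b) := by
    rw [hasSum_iff_tendsto_nat_of_nonneg fun k => hnonneg k]
    have hpartial (N : ℕ) :
        ∑ k ∈ Finset.range N, (f ((k : ℤ) - 1) - f k) = f (-1) - f ((N : ℤ) - 1) := by
      have := Finset.sum_range_sub' (fun k : ℕ => f ((k : ℤ) - 1)) N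
      simpa only [Nat.cast_add, Nat.cast_one, add_sub_cancel_right, Nat.cast_zero,
        zero_sub] using this
    simp only [hpartial]
    exact (hb.comp (tendsto_atTop_add_const_right _ (-1) tendsto_natCast_atTop_atTop)).const_sub _
  have hneg : HasSum (fun k : ℕ => f (-((k : ℤ) + 1) - 1) - f (-((k : ℤ) + 1))) (a - f (-1)) := by
    rw [hasSum_iff_tendsto_nat_of_nonneg fun k => hnonneg _]
    have hpartial (N : ℕ) : ∑ k ∈ Finset.range N, (f (-((k : ℤ) + 1) - 1) - f (-((k : ℤ) + 1)))
        = f (-(N : ℤ) - 1) - f (-1) := by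
      have := Finset.sum_range_sub (fun k : ℕ => f (-(k : ℤ) - 1)) N
      simp only [Nat.cast_add, Nat.cast_one, Nat.cast_zero, neg_zero, zero_sub] at this
      rw [← this]
      refine Finset.sum_congr rfl fun k _ => ?_
      ring_nf
    simp only [hpartial]
    exact (ha.comp (tendsto_atBot_add_const_right _ (-1)
      (tendsto_neg_atTop_atBot.comp tendsto_natCast_atTop_atTop))).sub_const _
  simpa only [sub_add_sub_cancel'] using
    HasSum.of_nat_of_neg_add_one (f := fun n => f (n - 1) - f n) hnat hneg

theorem tendsto_zpow_atTop_atTop_of_one_lt {q : ℝ} (hq : 1 < q) :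
    Tendsto (fun n : ℤ => q ^ n) atTop atTop := by
  simpa only [Function.comp_def, Real.rpow_intCast] using
    (tendsto_rpow_atTop_of_base_gt_one q hq).comp tendsto_intCast_atTop_atTop

theorem tendsto_zpow_atBot_zero_of_one_lt {q : ℝ} (hq : 1 < q) :
    Tendsto (fun n : ℤ => q ^ n) atBot (𝓝 0) := by
  simpa only [Function.comp_def, id, Real.rpow_intCast] using
    (tendsto_rpow_atBot_of_base_gt_one q hq).comp ((tendsto_intCast_atBot_iff (R := ℝ)).2 tendsto_id)

section
variable {q x : ℝ}

theorem antitone_inv_zpow_mul_add_one (hq : 1 ≤ q) (hx : 0 ≤ x) :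
    Antitone fun n : ℤ => (q ^ n * x + 1)⁻¹ := by
  intro m n hmn
  have := zpow_le_zpow_right₀ hq hmn
  dsimp only
  gcongr

theorem tendsto_inv_zpow_mul_add_one_atTop (hq : 1 < q) (hx : 0 < x) :
    Tendsto (fun n : ℤ => (q ^ n * x + 1)⁻¹) atTop (𝓝 0) :=
  (tendsto_atTop_add_const_right _ 1
    ((tendsto_zpow_atTop_atTop_of_one_lt hq).atTop_mul_const hx)).inv_tendsto_atTop

theorem tendsto_inv_zpow_mul_add_one_atBot (hq : 1 < q) :
    Tendsto (fun n : ℤ => (q ^ n * x + 1)⁻¹) atBot (𝓝 1) := by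
  simpa using (((tendsto_zpow_atBot_zero_of_one_lt hq).mul_const x).add_const 1).inv₀ (by simp)

theorem zpow_mul_div_eq_inv_sub_inv (hq : 1 < q) (hx : 0 < x) (n : ℤ) :
    q ^ n * x / ((q ^ n * x + q) * (q ^ n * x + 1)) =
      ((q ^ (n - 1) * x + 1)⁻¹ - (q ^ n * x + 1)⁻¹) / (q - 1) := by
  have hq0 : 0 < q := zero_lt_one.trans hq
  rw [zpow_sub_one₀ hq0.ne']
  have := zpow_pos hq0 n
  have : q - 1 ≠ 0 := sub_ne_zero.2 (ne_of_gt hq)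
  field_simp
  ring

theorem hasSum_zpow_mul_div (hq : 1 < q) (hx : 0 < x) :
    HasSum (fun n : ℤ => q ^ n * x / ((q ^ n * x + q) * (q ^ n * x + 1))) (1 / (q - 1)) := by
  simp_rw [zpow_mul_div_eq_inv_sub_inv hq hx]
  simpa using ((antitone_inv_zpow_mul_add_one hq.le hx.le).hasSum_int_sub
    (tendsto_inv_zpow_mul_add_one_atBot hq) (tendsto_inv_zpow_mul_add_one_atTop hq hx)).div_const
      (q - 1)

end

/-- for `λ > 1` and `x > 0`, the doubly infinite series
`∑_{n ∈ ℤ} λ^{2n} x / ((λ^{2n} x + λ²)(λ^{2n} x + 1))` converges absolutely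
and its sum equals `1/(λ² − 1)`. -/
theorem telescoping_series_two
    (lam x : ℝ) (hlam : 1 < lam) (hx : 0 < x) :
    Summable (fun n : ℤ =>
      |lam ^ (2 * n) * x / ((lam ^ (2 * n) * x + lam ^ 2) * (lam ^ (2 * n) * x + 1))|) ∧
    ∑' n : ℤ, lam ^ (2 * n) * x / ((lam ^ (2 * n) * x + lam ^ 2) * (lam ^ (2 * n) * x + 1))
      = 1 / (lam ^ 2 - 1) := by
  have hpow (n : ℤ) : lam ^ (2 * n) = (lam ^ 2) ^ n := by rw [zpow_mul]; norm_cast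
  have hsum := hasSum_zpow_mul_div (one_lt_pow₀ hlam two_ne_zero) hx
  simp_rw [← hpow] at hsum
  exact ⟨hsum.summable.abs, hsum.tsum_eq⟩
end

section
/- Energy component of the truncated scattering map (formula (39)): let a > b > 0 be constants, c = sqrt(a² − b²), λ = (a+c)/(a−c), and let da, db ∈ ℝ be arbitrary (the time derivatives of the semi-axes at the frozen time). For ξ₀ > 0 put ξ_n = λⁿ ξ₀ for n ∈ ℤ. Then the series ∑_{n ∈ ℤ} [ λ ( da · b (1 − ξ_n²)² + 4 a · db · ξ_n² ) / ( b (ξ_n² + λ)(λ ξ_n² + 1) ) − da ] converges absolutely and its sum equals (b · db − a · da)/c. -/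
/-!
With `x = ξ_n²` the summand equals `C · (F n − F (n + 1))`, where `C = (b·db − a·da)/c` and
`F n = λ / (ξ_n² + λ)`; the identity reduces to the relations `c² = a² − b²` and
`λ(a − c) = a + c`. Since `ξ_{n+1}² = λ² ξ_n²`, the sequence `F` decreases from `1` (as `n → −∞`)
to `0` (as `n → +∞`), so the series telescopes over `ℤ` to `C · (1 − 0)`; the differences are
nonnegative, which gives absolute convergence.
-/

open Filter Topology

theorem hasSum_sub_succ_of_antitone {f : ℕ → ℝ} {l : ℝ} (hf : Antitone f)
    (hl : Tendsto f atTop (𝓝 l)) : HasSum (fun n => f n - f (n + 1)) (f 0 - l) := by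
  rw [hasSum_iff_tendsto_nat_of_nonneg (fun n => sub_nonneg.2 (hf n.le_succ))]
  simp_rw [Finset.sum_range_sub']
  exact tendsto_const_nhds.sub hl

theorem hasSum_int_sub_succ_of_antitone {F : ℤ → ℝ} {lBot lTop : ℝ} (hF : Antitone F)
    (hTop : Tendsto (fun n : ℕ => F n) atTop (𝓝 lTop))
    (hBot : Tendsto (fun n : ℕ => F (-n)) atTop (𝓝 lBot)) :
    HasSum (fun n => F n - F (n + 1)) (lBot - lTop) := by
  have hpos : HasSum (fun n : ℕ => F n - F (n + 1)) (F 0 - lTop) := by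
    simpa using hasSum_sub_succ_of_antitone (hF.comp_monotone Nat.mono_cast) hTop
  have hneg : HasSum (fun n : ℕ => F (-(n + 1)) - F (-(n + 1) + 1)) (lBot - F 0) := by
    have hanti : Antitone fun n : ℕ => -F (-n) := fun m n hmn =>
      neg_le_neg (hF (neg_le_neg (Nat.cast_le.2 hmn)))
    convert hasSum_sub_succ_of_antitone hanti hBot.neg using 1
    · ext n
      rw [show -((n : ℤ) + 1) + 1 = -n by ring, Nat.cast_succ]
      ring
    · rw [Nat.cast_zero, neg_zero]
      ring
  convert hpos.of_nat_of_neg_add_one (f := fun n => F n - F (n + 1)) hneg using 1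
  ring

theorem energy_summand_eq {a b c lam x da db : ℝ} (hb : b ≠ 0) (hc : c ≠ 0)
    (hc2 : c ^ 2 = a ^ 2 - b ^ 2) (hlam : lam * (a - c) = a + c)
    (hx : x + lam ≠ 0) (hx' : lam * x + 1 ≠ 0) :
    lam * (da * b * (1 - x) ^ 2 + 4 * a * db * x) / (b * (x + lam) * (lam * x + 1)) - da
      = (b * db - a * da) / c * (lam / (x + lam) - 1 / (lam * x + 1)) := by
  -- after clearing denominators both sides are `x` times the coefficient identity
  -- `4aλ·db − b(λ + 1)²·da = b(λ² − 1)·(b·db − a·da)/c`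
  field_simp
  linear_combination x * (da * b * (lam + 1) + db * (-lam * (lam * (a - c) - (a + c))
    - 2 * lam * (a + c) + (lam ^ 2 - 1) * (a - c))) * hlam - x * db * (lam ^ 2 - 1) * hc2

section Orbit

variable {lam ξ₀ : ℝ}

theorem antitone_div_sq_zpow_mul_add (hlam : 1 ≤ lam) (hξ₀ : 0 ≤ ξ₀) :
    Antitone fun n : ℤ => lam / ((lam ^ n * ξ₀) ^ 2 + lam) := by
  intro m n hmn
  have hlam0 : 0 ≤ lam := zero_le_one.trans hlam
  have hpos : 0 ≤ lam ^ m * ξ₀ := by positivity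
  have hle : lam ^ m * ξ₀ ≤ lam ^ n * ξ₀ :=
    mul_le_mul_of_nonneg_right (zpow_le_zpow_right₀ hlam hmn) hξ₀
  dsimp only
  gcongr

theorem div_sq_zpow_succ_mul_add (hlam : 0 < lam) (n : ℤ) :
    lam / ((lam ^ (n + 1) * ξ₀) ^ 2 + lam) = 1 / (lam * (lam ^ n * ξ₀) ^ 2 + 1) := by
  rw [zpow_add_one₀ hlam.ne']
  field_simp

theorem tendsto_div_sq_pow_mul_add_atTop (hlam : 1 < lam) (hξ₀ : 0 < ξ₀) :
    Tendsto (fun n : ℕ => lam / ((lam ^ (n : ℤ) * ξ₀) ^ 2 + lam)) atTop (𝓝 0) := by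
  have hgrow : Tendsto (fun n : ℕ => lam ^ n * ξ₀) atTop atTop :=
    (tendsto_pow_atTop_atTop_of_one_lt hlam).atTop_mul_const hξ₀
  simp only [zpow_natCast]
  exact tendsto_const_nhds.div_atTop
    (tendsto_atTop_add_const_right _ _ ((tendsto_pow_atTop two_ne_zero).comp hgrow))

theorem tendsto_div_sq_pow_neg_mul_add_atTop (hlam : 1 < lam) :
    Tendsto (fun n : ℕ => lam / ((lam ^ (-(n : ℤ)) * ξ₀) ^ 2 + lam)) atTop (𝓝 1) := by
  have hlam0 : 0 < lam := by linarith
  have hdecay : Tendsto (fun n : ℕ => (lam ^ n)⁻¹) atTop (𝓝 0) :=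
    (tendsto_pow_atTop_atTop_of_one_lt hlam).inv_tendsto_atTop
  simp only [zpow_neg, zpow_natCast]
  have hden : Tendsto (fun n : ℕ => ((lam ^ n)⁻¹ * ξ₀) ^ 2 + lam) atTop (𝓝 lam) := by
    simpa using (hdecay.mul_const ξ₀).pow 2 |>.add_const lam
  simpa [Pi.div_def, hlam0.ne'] using (tendsto_const_nhds (x := lam)).div hden hlam0.ne'

end Orbit

/-- energy component of the truncated scattering map.  With
`ξ_n = λⁿ ξ₀`, the series
`∑_{n ∈ ℤ} [ λ(da·b(1−ξ_n²)² + 4a·db·ξ_n²) / (b(ξ_n²+λ)(λξ_n²+1)) − da ]`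
converges absolutely and its sum equals `(b·db − a·da)/c`. -/
theorem scattering_map_energy_component
    (a b : ℝ) (hb : 0 < b) (hab : b < a)
    (c lam : ℝ) (hc : c = Real.sqrt (a ^ 2 - b ^ 2)) (hlam : lam = (a + c) / (a - c))
    (da db : ℝ) (ξ₀ : ℝ) (hξ₀ : 0 < ξ₀) :
    Summable (fun n : ℤ =>
      |lam * (da * b * (1 - (lam ^ n * ξ₀) ^ 2) ^ 2 + 4 * a * db * (lam ^ n * ξ₀) ^ 2) /
        (b * ((lam ^ n * ξ₀) ^ 2 + lam) * (lam * (lam ^ n * ξ₀) ^ 2 + 1)) - da|) ∧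
    ∑' n : ℤ,
      (lam * (da * b * (1 - (lam ^ n * ξ₀) ^ 2) ^ 2 + 4 * a * db * (lam ^ n * ξ₀) ^ 2) /
        (b * ((lam ^ n * ξ₀) ^ 2 + lam) * (lam * (lam ^ n * ξ₀) ^ 2 + 1)) - da)
      = (b * db - a * da) / c := by
  have hab2 : 0 < a ^ 2 - b ^ 2 := by nlinarith
  have hc2 : c ^ 2 = a ^ 2 - b ^ 2 := hc ▸ Real.sq_sqrt hab2.le
  have hc0 : 0 < c := hc ▸ Real.sqrt_pos.2 hab2
  have hca : 0 < a - c := by nlinarith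
  have hlam1 : 1 < lam := by rw [hlam, one_lt_div hca]; linarith
  have hlam0 : 0 < lam := by linarith
  set F : ℤ → ℝ := fun n => lam / ((lam ^ n * ξ₀) ^ 2 + lam)
  have hF : Antitone F := antitone_div_sq_zpow_mul_add hlam1.le hξ₀.le
  have hsum : HasSum (fun n => F n - F (n + 1)) 1 := by
    simpa using hasSum_int_sub_succ_of_antitone hF
      (tendsto_div_sq_pow_mul_add_atTop hlam1 hξ₀) (tendsto_div_sq_pow_neg_mul_add_atTop hlam1)
  have hterm : ∀ n : ℤ,
      lam * (da * b * (1 - (lam ^ n * ξ₀) ^ 2) ^ 2 + 4 * a * db * (lam ^ n * ξ₀) ^ 2) /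
        (b * ((lam ^ n * ξ₀) ^ 2 + lam) * (lam * (lam ^ n * ξ₀) ^ 2 + 1)) - da
        = (b * db - a * da) / c * (F n - F (n + 1)) := fun n => by
    rw [energy_summand_eq hb.ne' hc0.ne' hc2 (by rw [hlam, div_mul_cancel₀ _ hca.ne'])
      (by positivity) (by positivity)]
    simp only [F, div_sq_zpow_succ_mul_add hlam0]
  have hstep : ∀ n, 0 ≤ F n - F (n + 1) := fun n => sub_nonneg.2 (hF (by omega))
  simp_rw [hterm, abs_mul, abs_of_nonneg (hstep _)]
  exact ⟨(hsum.mul_left _).summable, by simpa using (hsum.mul_left _).tsum_eq⟩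
end
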